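/- arXiv:2210.01095 — 4 statements merged into one kernel-verified Lean document; each statement's English description precedes it below -/
import Mathlib

section
/- Let (Z,d,ν) be a compact metric measure space, 0 < diam(Z) < 1, with ν Ahlfors Q-regular for some Q > 0. Let 1 < p < ∞ and 0 < θ < 1 with pθ > Q. Then there is a constant C > 0 (depending only on p, θ, Q and the Ahlfors regularity constant of ν) such that for every x₀ ∈ Z and all radii 0 < r < R/2, the relative Besov capacity of the condenser consisting of the closed ball B̄(x₀,r) and the complement Z \ B(x₀,R) satisfies cp_{B^θ_{p,p}(Z)}(B̄(x₀,r), Z \ B(x₀,R)) ≤ C · R^{Q−θp}. -/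
open MeasureTheory Metric Set
open scoped ENNReal

/-- The Besov energy `‖u‖^p_{B^θ_{p,p}}` of a function `u` on a metric measure space. -/
noncomputable def besovEnergy {Z : Type*} [MetricSpace Z] [MeasurableSpace Z]
    (ν : Measure Z) (θ p : ℝ) (u : Z → ℝ) : ℝ≥0∞ :=
  ∫⁻ x, ∫⁻ z,
    ENNReal.ofReal (|u x - u z| ^ p / dist x z ^ (θ * p)) / ν (ball x (dist x z)) ∂ν ∂ν

/-- `u` belongs to the Besov space `B^θ_{p,p}`: it is in `L^p` and has finite Besov energy. -/
def MemBesov {Z : Type*} [MetricSpace Z] [MeasurableSpace Z]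
    (ν : Measure Z) (θ p : ℝ) (u : Z → ℝ) : Prop :=
  MemLp u (ENNReal.ofReal p) ν ∧ besovEnergy ν θ p u < ⊤

/-- The relative Besov capacity of the condenser `(E, F)`. -/
noncomputable def besovCapacity {Z : Type*} [MetricSpace Z] [MeasurableSpace Z]
    (ν : Measure Z) (θ p : ℝ) (E F : Set Z) : ℝ≥0∞ :=
  ⨅ (u : Z → ℝ) (_ : MemBesov ν θ p u)
    (_ : ∃ U, IsOpen U ∧ E ⊆ U ∧ ∀ x ∈ U, 1 ≤ u x)
    (_ : ∃ V, IsOpen V ∧ F ⊆ V ∧ ∀ x ∈ V, u x ≤ 0),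
    besovEnergy ν θ p u

/-- `ν` is Ahlfors `Q`-regular with constant `C`. -/
def IsAhlforsRegular {Z : Type*} [MetricSpace Z] [MeasurableSpace Z]
    (ν : Measure Z) (Q C : ℝ) : Prop :=
  1 ≤ C ∧ ∀ (x : Z) (r : ℝ), 0 < r → r < 2 * Metric.diam (Set.univ : Set Z) →
    ENNReal.ofReal (r ^ Q / C) ≤ ν (ball x r) ∧ ν (ball x r) ≤ ENNReal.ofReal (C * r ^ Q)


private lemma geom_pow_rpow {a : ℝ} (ha : 0 < a) (e : ℝ) (k : ℕ) :
    ((a ^ k : ℝ)) ^ e = (a ^ e) ^ k := by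
  rw [← Real.rpow_natCast a k, ← Real.rpow_natCast (a ^ e) k, ← Real.rpow_mul ha.le,
    ← Real.rpow_mul ha.le, mul_comm]

private lemma tsum_ofReal_geom {A q : ℝ} (hA : 0 ≤ A) (hq0 : 0 ≤ q) (hq1 : q < 1) :
    (∑' k : ℕ, ENNReal.ofReal (A * q ^ k)) = ENNReal.ofReal (A * (1 - q)⁻¹) := by
  have h1 : ∀ k : ℕ, ENNReal.ofReal (A * q ^ k) = ENNReal.ofReal A * (ENNReal.ofReal q) ^ k := by
    intro k; rw [ENNReal.ofReal_mul hA, ENNReal.ofReal_pow hq0]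
  simp_rw [h1]
  rw [ENNReal.tsum_mul_left, ENNReal.tsum_geometric, ENNReal.ofReal_mul hA,
    ENNReal.ofReal_inv_of_pos (by linarith), ENNReal.ofReal_sub 1 hq0, ENNReal.ofReal_one]

private lemma radial_bound
    {Z : Type*} [MetricSpace Z] [MeasurableSpace Z] [BorelSpace Z]
    (ν : Measure Z) {Q CA p θ : ℝ}
    (hQ : 0 < Q) (hCA : 1 ≤ CA)
    (hball : ∀ (x : Z) (t : ℝ), 0 < t → ν (ball x t) ≤ ENNReal.ofReal (CA * t ^ Q))
    (hp : 0 < p) (hθ0 : 0 < θ) (hθ1 : θ < 1) :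
    ∃ c₀ : ℝ, 0 < c₀ ∧ ∀ (R : ℝ), 0 < R → ∀ c : Z,
      ∫⁻ w, ENNReal.ofReal ((min 1 (4 * dist c w / R)) ^ p * dist c w ^ (-(θ * p + Q))) ∂ν
        ≤ ENNReal.ofReal (c₀ * R ^ (-(θ * p))) := by
  classical
  set α : ℝ := θ * p + Q with hα_def
  have hθp : 0 < θ * p := mul_pos hθ0 hp
  have hα : 0 < α := by positivity
  set qN : ℝ := (1/2 : ℝ) ^ (p * (1 - θ)) with hqN_def
  set qF : ℝ := (2 : ℝ) ^ (-(θ * p)) with hqF_def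
  have hqN0 : 0 ≤ qN := by positivity
  have hqN1 : qN < 1 := Real.rpow_lt_one (by norm_num) (by norm_num) (by nlinarith)
  have hqF0 : 0 ≤ qF := by positivity
  have hqF1 : qF < 1 := Real.rpow_lt_one_of_one_lt_of_neg one_lt_two (by linarith)
  refine ⟨CA * 4 ^ (θ * p) * ((1/2 : ℝ) ^ (-α) * (1 - qN)⁻¹ + 2 ^ Q * (1 - qF)⁻¹),
    ?_, ?_⟩
  · have h1 : (0:ℝ) < (1 - qN)⁻¹ := inv_pos.mpr (by linarith)
    have h2 : (0:ℝ) < (1 - qF)⁻¹ := inv_pos.mpr (by linarith)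
    have : (0:ℝ) < (1/2 : ℝ) ^ (-α) * (1 - qN)⁻¹ + 2 ^ Q * (1 - qF)⁻¹ := by positivity
    positivity
  intro R hR c
  set N : ℕ → Set Z := fun k => {w | R/4 * (1/2)^(k+1) ≤ dist c w ∧ dist c w < R/4 * (1/2)^k}
    with hN_def
  set F : ℕ → Set Z := fun j => {w | R/4 * 2^j ≤ dist c w ∧ dist c w < R/4 * 2^(j+1)}
    with hF_def
  have hdm : Measurable (fun w : Z => dist c w) :=
    (continuous_const.dist continuous_id).measurable
  have hNm : ∀ k, MeasurableSet (N k) := fun k =>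
    hdm measurableSet_Ico
  have hFm : ∀ j, MeasurableSet (F j) := fun j =>
    hdm measurableSet_Ico
  set bN : ℕ → ℝ := fun k => (((1:ℝ)/2)^k)^p * (R/4 * (1/2)^(k+1)) ^ (-α) with hbN_def
  set bF : ℕ → ℝ := fun j => (R/4 * (2:ℝ)^j) ^ (-α) with hbF_def
  have hR4 : (0:ℝ) < R/4 := by linarith
  -- pointwise bound
  have hpt : ∀ w : Z, ENNReal.ofReal ((min 1 (4 * dist c w / R)) ^ p * dist c w ^ (-α))
      ≤ (∑' k, (N k).indicator (fun _ => ENNReal.ofReal (bN k)) w)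
        + ∑' j, (F j).indicator (fun _ => ENNReal.ofReal (bF j)) w := by
    intro w
    rcases eq_or_lt_of_le (dist_nonneg : (0:ℝ) ≤ dist c w) with hd0 | hd0
    · rw [← hd0]
      simp [Real.zero_rpow hp.ne']
    by_cases hcase : dist c w < R/4
    · -- near regime
      have hex : ∃ k : ℕ, R/4 * (1/2)^(k+1) ≤ dist c w := by
        obtain ⟨n, hn⟩ := exists_pow_lt_of_lt_one (x := dist c w / (R/4)) (y := (1/2:ℝ))
          (by positivity) (by norm_num)
        refine ⟨n, ?_⟩
        have h2 : (R/4) * (1/2:ℝ)^n < dist c w := by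
          rw [lt_div_iff₀ hR4] at hn; nlinarith
        have h3 : ((1:ℝ)/2)^(n+1) ≤ (1/2:ℝ)^n := by
          apply pow_le_pow_of_le_one (by norm_num) (by norm_num) (Nat.le_succ n)
        nlinarith
      obtain ⟨k, hk1, hk2⟩ : ∃ k : ℕ, R/4 * (1/2)^(k+1) ≤ dist c w ∧
          dist c w < R/4 * (1/2)^k := by
        refine ⟨Nat.find hex, Nat.find_spec hex, ?_⟩
        rcases Nat.eq_zero_or_pos (Nat.find hex) with h | h
        · rw [h]; simpa using hcase
        · have hlt : Nat.find hex - 1 < Nat.find hex := by omega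
          have hmin := Nat.find_min hex hlt
          push_neg at hmin
          have heq : Nat.find hex - 1 + 1 = Nat.find hex := by omega
          rwa [heq] at hmin
      have hreal : (min 1 (4 * dist c w / R)) ^ p * dist c w ^ (-α) ≤ bN k := by
        have h1 : min 1 (4 * dist c w / R) ≤ ((1:ℝ)/2)^k := by
          refine le_trans (min_le_right _ _) ?_
          rw [div_le_iff₀ hR]
          nlinarith
        have h2 : (min 1 (4 * dist c w / R)) ^ p ≤ (((1:ℝ)/2)^k) ^ p :=
          Real.rpow_le_rpow (le_min zero_le_one (by positivity)) h1 hp.le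
        have h3 : dist c w ^ (-α) ≤ (R/4 * (1/2)^(k+1)) ^ (-α) :=
          Real.rpow_le_rpow_of_nonpos (by positivity) hk1 (by linarith)
        exact mul_le_mul h2 h3 (by positivity) (by positivity)
      calc ENNReal.ofReal ((min 1 (4 * dist c w / R)) ^ p * dist c w ^ (-α))
          ≤ ENNReal.ofReal (bN k) := ENNReal.ofReal_le_ofReal hreal
        _ = (N k).indicator (fun _ => ENNReal.ofReal (bN k)) w :=
            (Set.indicator_of_mem (show w ∈ N k from ⟨hk1, hk2⟩) (fun _ => ENNReal.ofReal (bN k))).symm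
        _ ≤ ∑' k, (N k).indicator (fun _ => ENNReal.ofReal (bN k)) w := ENNReal.le_tsum k
        _ ≤ _ := le_self_add
    · -- far regime
      push_neg at hcase
      have hex : ∃ j : ℕ, dist c w < R/4 * 2^(j+1) := by
        obtain ⟨n, hn⟩ := pow_unbounded_of_one_lt (dist c w / (R/4)) (one_lt_two (α := ℝ))
        refine ⟨n, ?_⟩
        rw [div_lt_iff₀ hR4] at hn
        have : ((2:ℝ)^n) ≤ 2^(n+1) := by
          apply pow_le_pow_right₀ (by norm_num) (Nat.le_succ n)
        nlinarith
      obtain ⟨j, hj1, hj2⟩ : ∃ j : ℕ, R/4 * 2^j ≤ dist c w ∧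
          dist c w < R/4 * 2^(j+1) := by
        refine ⟨Nat.find hex, ?_, Nat.find_spec hex⟩
        rcases Nat.eq_zero_or_pos (Nat.find hex) with h | h
        · rw [h]; simpa using hcase
        · have hlt : Nat.find hex - 1 < Nat.find hex := by omega
          have hmin := Nat.find_min hex hlt
          push_neg at hmin
          have heq : Nat.find hex - 1 + 1 = Nat.find hex := by omega
          rwa [heq] at hmin
      have hreal : (min 1 (4 * dist c w / R)) ^ p * dist c w ^ (-α) ≤ bF j := by
        have h2 : (min 1 (4 * dist c w / R)) ^ p ≤ 1 :=
          Real.rpow_le_one (le_min zero_le_one (by positivity)) (min_le_left _ _) hp.le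
        have h3 : dist c w ^ (-α) ≤ (R/4 * 2^j) ^ (-α) :=
          Real.rpow_le_rpow_of_nonpos (by positivity) hj1 (by linarith)
        calc (min 1 (4 * dist c w / R)) ^ p * dist c w ^ (-α)
            ≤ 1 * ((R/4 * 2^j) ^ (-α)) :=
              mul_le_mul h2 h3 (by positivity) zero_le_one
          _ = bF j := one_mul _
      calc ENNReal.ofReal ((min 1 (4 * dist c w / R)) ^ p * dist c w ^ (-α))
          ≤ ENNReal.ofReal (bF j) := ENNReal.ofReal_le_ofReal hreal
        _ = (F j).indicator (fun _ => ENNReal.ofReal (bF j)) w :=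
            (Set.indicator_of_mem (show w ∈ F j from ⟨hj1, hj2⟩) (fun _ => ENNReal.ofReal (bF j))).symm
        _ ≤ ∑' j, (F j).indicator (fun _ => ENNReal.ofReal (bF j)) w := ENNReal.le_tsum j
        _ ≤ _ := self_le_add_left _ _
  -- sum the near annuli
  have hNsum : (∑' k, ENNReal.ofReal (bN k) * ν (N k))
      ≤ ENNReal.ofReal ((CA * (R/4) ^ (-(θ*p)) * ((1:ℝ)/2) ^ (-α)) * (1 - qN)⁻¹) := by
    have key : ∀ k : ℕ, ENNReal.ofReal (bN k) * ν (N k)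
        ≤ ENNReal.ofReal ((CA * (R/4) ^ (-(θ*p)) * ((1:ℝ)/2) ^ (-α)) * qN ^ k) := by
      intro k
      have hsub : N k ⊆ ball c (R/4 * (1/2)^k) := by
        intro w hw
        rw [mem_ball, dist_comm]
        exact hw.2
      have hν : ν (N k) ≤ ENNReal.ofReal (CA * (R/4 * (1/2)^k) ^ Q) :=
        le_trans (measure_mono hsub) (hball c _ (by positivity))
      have hx : (0:ℝ) < ((1:ℝ)/2)^k := by positivity
      have eexp : p + -α + Q = p * (1 - θ) := by rw [hα_def]; ring
      have e1 : (R/4 * ((1:ℝ)/2)^(k+1)) ^ (-α)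
          = (R/4) ^ (-α) * ((((1:ℝ)/2)^k) ^ (-α) * ((1:ℝ)/2) ^ (-α)) := by
        rw [pow_succ, ← mul_assoc, Real.mul_rpow (by positivity) (by norm_num),
          Real.mul_rpow (by positivity) (by positivity), mul_assoc]
      have e2 : (R/4 * ((1:ℝ)/2)^k) ^ Q = (R/4) ^ Q * (((1:ℝ)/2)^k) ^ Q :=
        Real.mul_rpow (by positivity) (by positivity)
      have e3 : (((1:ℝ)/2)^k) ^ p * (((1:ℝ)/2)^k) ^ (-α) * (((1:ℝ)/2)^k) ^ Q
          = qN ^ k := by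
        rw [← Real.rpow_add hx, ← Real.rpow_add hx, eexp,
          geom_pow_rpow (by norm_num : (0:ℝ) < 1/2), hqN_def]
      have e4 : (R/4) ^ (-α) * (R/4) ^ Q = (R/4) ^ (-(θ*p)) := by
        rw [← Real.rpow_add hR4]
        congr 1
        rw [hα_def]; ring
      calc ENNReal.ofReal (bN k) * ν (N k)
          ≤ ENNReal.ofReal (bN k) * ENNReal.ofReal (CA * (R/4 * (1/2)^k) ^ Q) :=
            mul_le_mul_right hν _
        _ = ENNReal.ofReal (bN k * (CA * (R/4 * (1/2)^k) ^ Q)) := by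
            rw [← ENNReal.ofReal_mul (by positivity)]
        _ = ENNReal.ofReal ((CA * (R/4) ^ (-(θ*p)) * ((1:ℝ)/2) ^ (-α)) * qN ^ k) := by
            congr 1
            calc bN k * (CA * (R/4 * ((1:ℝ)/2)^k) ^ Q)
                = (((1:ℝ)/2)^k) ^ p * (R/4 * ((1:ℝ)/2)^(k+1)) ^ (-α)
                    * (CA * (R/4 * ((1:ℝ)/2)^k) ^ Q) := rfl
              _ = ((((1:ℝ)/2)^k) ^ p * (((1:ℝ)/2)^k) ^ (-α) * (((1:ℝ)/2)^k) ^ Q)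
                  * ((R/4) ^ (-α) * (R/4) ^ Q) * (((1:ℝ)/2) ^ (-α) * CA) := by
                  rw [e1, e2]; ring
              _ = qN ^ k * (R/4) ^ (-(θ*p)) * (((1:ℝ)/2) ^ (-α) * CA) := by rw [e3, e4]
              _ = CA * (R/4) ^ (-(θ*p)) * ((1:ℝ)/2) ^ (-α) * qN ^ k := by ring
    calc (∑' k, ENNReal.ofReal (bN k) * ν (N k))
        ≤ ∑' k, ENNReal.ofReal ((CA * (R/4) ^ (-(θ*p)) * ((1:ℝ)/2) ^ (-α)) * qN ^ k) :=
          ENNReal.tsum_le_tsum key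
      _ = _ := tsum_ofReal_geom (by positivity) hqN0 hqN1
  -- sum the far annuli
  have hFsum : (∑' j, ENNReal.ofReal (bF j) * ν (F j))
      ≤ ENNReal.ofReal ((CA * (R/4) ^ (-(θ*p)) * (2:ℝ) ^ Q) * (1 - qF)⁻¹) := by
    have key : ∀ j : ℕ, ENNReal.ofReal (bF j) * ν (F j)
        ≤ ENNReal.ofReal ((CA * (R/4) ^ (-(θ*p)) * (2:ℝ) ^ Q) * qF ^ j) := by
      intro j
      have hsub : F j ⊆ ball c (R/4 * 2^(j+1)) := by
        intro w hw
        rw [mem_ball, dist_comm]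
        exact hw.2
      have hν : ν (F j) ≤ ENNReal.ofReal (CA * (R/4 * 2^(j+1)) ^ Q) :=
        le_trans (measure_mono hsub) (hball c _ (by positivity))
      have hx : (0:ℝ) < (2:ℝ)^j := by positivity
      have e1 : (R/4 * (2:ℝ)^(j+1)) ^ Q
          = (R/4) ^ Q * (((2:ℝ)^j) ^ Q * (2:ℝ) ^ Q) := by
        rw [pow_succ, ← mul_assoc, Real.mul_rpow (by positivity) (by norm_num),
          Real.mul_rpow (by positivity) (by positivity), mul_assoc]
      have e2 : (R/4 * (2:ℝ)^j) ^ (-α) = (R/4) ^ (-α) * ((2:ℝ)^j) ^ (-α) :=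
        Real.mul_rpow (by positivity) (by positivity)
      have eexp : -α + Q = -(θ*p) := by rw [hα_def]; ring
      have e3 : ((2:ℝ)^j) ^ (-α) * ((2:ℝ)^j) ^ Q = qF ^ j := by
        rw [← Real.rpow_add hx, eexp, geom_pow_rpow (by norm_num : (0:ℝ) < 2), hqF_def]
      have e4 : (R/4) ^ (-α) * (R/4) ^ Q = (R/4) ^ (-(θ*p)) := by
        rw [← Real.rpow_add hR4, eexp]
      calc ENNReal.ofReal (bF j) * ν (F j)
          ≤ ENNReal.ofReal (bF j) * ENNReal.ofReal (CA * (R/4 * 2^(j+1)) ^ Q) :=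
            mul_le_mul_right hν _
        _ = ENNReal.ofReal (bF j * (CA * (R/4 * 2^(j+1)) ^ Q)) := by
            rw [← ENNReal.ofReal_mul (by positivity)]
        _ = ENNReal.ofReal ((CA * (R/4) ^ (-(θ*p)) * (2:ℝ) ^ Q) * qF ^ j) := by
            congr 1
            calc bF j * (CA * (R/4 * (2:ℝ)^(j+1)) ^ Q)
                = (R/4 * (2:ℝ)^j) ^ (-α) * (CA * (R/4 * (2:ℝ)^(j+1)) ^ Q) := rfl
              _ = (((2:ℝ)^j) ^ (-α) * ((2:ℝ)^j) ^ Q) * ((R/4) ^ (-α) * (R/4) ^ Q)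
                  * ((2:ℝ) ^ Q * CA) := by rw [e1, e2]; ring
              _ = qF ^ j * (R/4) ^ (-(θ*p)) * ((2:ℝ) ^ Q * CA) := by rw [e3, e4]
              _ = CA * (R/4) ^ (-(θ*p)) * (2:ℝ) ^ Q * qF ^ j := by ring
    calc (∑' j, ENNReal.ofReal (bF j) * ν (F j))
        ≤ ∑' j, ENNReal.ofReal ((CA * (R/4) ^ (-(θ*p)) * (2:ℝ) ^ Q) * qF ^ j) :=
          ENNReal.tsum_le_tsum key
      _ = _ := tsum_ofReal_geom (by positivity) hqF0 hqF1
  -- put everything together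
  have hm1 : Measurable fun w => ∑' k, (N k).indicator (fun _ => ENNReal.ofReal (bN k)) w :=
    Measurable.ennreal_tsum fun k => measurable_const.indicator (hNm k)
  calc ∫⁻ w, ENNReal.ofReal ((min 1 (4 * dist c w / R)) ^ p * dist c w ^ (-α)) ∂ν
      ≤ ∫⁻ w, ((∑' k, (N k).indicator (fun _ => ENNReal.ofReal (bN k)) w)
          + ∑' j, (F j).indicator (fun _ => ENNReal.ofReal (bF j)) w) ∂ν :=
        lintegral_mono hpt
    _ = (∫⁻ w, ∑' k, (N k).indicator (fun _ => ENNReal.ofReal (bN k)) w ∂ν)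
        + ∫⁻ w, ∑' j, (F j).indicator (fun _ => ENNReal.ofReal (bF j)) w ∂ν :=
        lintegral_add_left hm1 _
    _ = (∑' k, ∫⁻ w, (N k).indicator (fun _ => ENNReal.ofReal (bN k)) w ∂ν)
        + ∑' j, ∫⁻ w, (F j).indicator (fun _ => ENNReal.ofReal (bF j)) w ∂ν := by
        rw [lintegral_tsum (fun k => (measurable_const.indicator (hNm k)).aemeasurable),
          lintegral_tsum (fun j => (measurable_const.indicator (hFm j)).aemeasurable)]
    _ = (∑' k, ENNReal.ofReal (bN k) * ν (N k))
        + ∑' j, ENNReal.ofReal (bF j) * ν (F j) := by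
        congr 1
        · exact tsum_congr fun k => lintegral_indicator_const (hNm k) _
        · exact tsum_congr fun j => lintegral_indicator_const (hFm j) _
    _ ≤ ENNReal.ofReal ((CA * (R/4) ^ (-(θ*p)) * ((1:ℝ)/2) ^ (-α)) * (1 - qN)⁻¹)
        + ENNReal.ofReal ((CA * (R/4) ^ (-(θ*p)) * (2:ℝ) ^ Q) * (1 - qF)⁻¹) :=
        add_le_add hNsum hFsum
    _ ≤ ENNReal.ofReal (CA * 4 ^ (θ * p) * (((1:ℝ)/2) ^ (-α) * (1 - qN)⁻¹
          + 2 ^ Q * (1 - qF)⁻¹) * R ^ (-(θ * p))) := by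
        rw [← ENNReal.ofReal_add
          (mul_nonneg (by positivity) (inv_nonneg.mpr (by linarith)))
          (mul_nonneg (by positivity) (inv_nonneg.mpr (by linarith)))]
        apply ENNReal.ofReal_le_ofReal
        have hsplit : (R/4) ^ (-(θ*p)) = R ^ (-(θ*p)) * 4 ^ (θ*p) := by
          rw [Real.div_rpow hR.le (by norm_num : (0:ℝ) ≤ 4),
            Real.rpow_neg (by norm_num : (0:ℝ) ≤ 4), div_eq_mul_inv, inv_inv]
        rw [hsplit]
        ring_nf
        exact le_refl _

theorem besov_capacity_annulus_upper_supercritical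
    {Z : Type*} [MetricSpace Z] [CompactSpace Z] [MeasurableSpace Z] [BorelSpace Z]
    (ν : Measure Z) (Q CA p θ : ℝ)
    (hdiam0 : 0 < Metric.diam (Set.univ : Set Z))
    (hdiam1 : Metric.diam (Set.univ : Set Z) < 1)
    (hQ : 0 < Q) (hreg : IsAhlforsRegular ν Q CA)
    (hp : 1 < p) (hθ0 : 0 < θ) (hθ1 : θ < 1) (hpθ : Q < p * θ) :
    ∃ C > 0, ∀ (x₀ : Z) (r R : ℝ), 0 < r → r < R / 2 →
      besovCapacity ν θ p (closedBall x₀ r) (univ \ ball x₀ R) ≤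
        ENNReal.ofReal (C * R ^ (Q - θ * p)) := by
  classical
  obtain ⟨hCA, hAhl⟩ := hreg
  have hp0 : (0:ℝ) < p := lt_trans one_pos hp
  have hθp : 0 < θ * p := mul_pos hθ0 hp0
  have hub : ∀ x y : Z, dist x y ≤ Metric.diam (Set.univ : Set Z) := fun x y =>
    Metric.dist_le_diam_of_mem isCompact_univ.isBounded (mem_univ x) (mem_univ y)
  have hZne : Nonempty Z := by
    rcases isEmpty_or_nonempty Z with h | h
    · rw [Set.univ_eq_empty_iff.mpr h, Metric.diam_empty] at hdiam0
      exact absurd hdiam0 (lt_irrefl 0)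
    · exact h
  obtain ⟨z₀⟩ := hZne
  have hballuniv : ∀ x : Z, ball x (3 * Metric.diam (Set.univ : Set Z) / 2) = univ := by
    intro x
    apply eq_univ_of_forall
    intro w
    rw [mem_ball]
    have := hub w x
    linarith
  haveI : IsFiniteMeasure ν := by
    constructor
    rw [← hballuniv z₀]
    exact lt_of_le_of_lt (hAhl z₀ _ (by linarith) (by linarith)).2 ENNReal.ofReal_lt_top
  have hB : ∀ (x : Z) (t : ℝ), 0 < t → ν (ball x t) ≤ ENNReal.ofReal (CA * t ^ Q) := by
    intro x t ht
    by_cases h2 : t < 2 * Metric.diam (Set.univ : Set Z)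
    · exact (hAhl x t ht h2).2
    · push_neg at h2
      calc ν (ball x t) ≤ ν (ball x (3 * Metric.diam (Set.univ : Set Z) / 2)) := by
            rw [hballuniv x]
            exact measure_mono (subset_univ _)
        _ ≤ ENNReal.ofReal (CA * (3 * Metric.diam (Set.univ : Set Z) / 2) ^ Q) :=
            (hAhl x _ (by linarith) (by linarith)).2
        _ ≤ ENNReal.ofReal (CA * t ^ Q) := by
            apply ENNReal.ofReal_le_ofReal
            apply mul_le_mul_of_nonneg_left _ (by linarith : (0:ℝ) ≤ CA)
            exact Real.rpow_le_rpow (by linarith) (by linarith) hQ.le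
  obtain ⟨c₀, hc₀, hrad⟩ := radial_bound ν hQ hCA hB hp0 hθ0 hθ1
  refine ⟨2 * CA^2 * c₀ + 1, by positivity, ?_⟩
  intro x₀ r R hr hrR
  have hR : 0 < R := by linarith
  by_cases hcaseR : Metric.diam (Set.univ : Set Z) < R
  · -- trivial case : the outer ball is everything, take u ≡ 1
    have hball_univ : ball x₀ R = univ := by
      apply eq_univ_of_forall
      intro w
      rw [mem_ball]
      exact lt_of_le_of_lt (hub w x₀) hcaseR
    have hE0 : besovEnergy ν θ p (fun _ => (1:ℝ)) = 0 := by
      unfold besovEnergy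
      simp [Real.zero_rpow hp0.ne']
    have hle : besovCapacity ν θ p (closedBall x₀ r) (univ \ ball x₀ R) ≤ 0 := by
      rw [← hE0]
      apply iInf_le_of_le (fun _ => (1:ℝ))
      apply iInf_le_of_le ⟨memLp_const 1, by simp [hE0]⟩
      apply iInf_le_of_le ⟨univ, isOpen_univ, subset_univ _, fun _ _ => le_refl 1⟩
      exact iInf_le _ ⟨∅, isOpen_empty, by rw [hball_univ]; simp,
        fun x hx => absurd hx (notMem_empty x)⟩
    exact le_trans hle zero_le
  push_neg at hcaseR
  -- main case : R ≤ diam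
  set u : Z → ℝ := fun x => min 1 (max 0 ((3*R/4 - dist x x₀) * (4/R))) with hu_def
  have hu0 : ∀ x, 0 ≤ u x := fun x => le_min zero_le_one (le_max_left _ _)
  have hu1 : ∀ x, u x ≤ 1 := fun x => min_le_left _ _
  have hucont : Continuous u := by
    apply continuous_const.min
    apply continuous_const.max
    exact (continuous_const.sub (continuous_id.dist continuous_const)).mul continuous_const
  have hmemlp : MemLp u (ENNReal.ofReal p) ν :=
    MemLp.of_bound hucont.aestronglyMeasurable 1
      (ae_of_all _ fun x => by
        rw [Real.norm_eq_abs, abs_of_nonneg (hu0 x)]; exact hu1 x)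
  have hLip : ∀ x z : Z, |u x - u z| ≤ min 1 (4 * dist x z / R) := by
    intro x z
    refine le_min ?_ ?_
    · rw [abs_le]
      constructor <;> nlinarith [hu0 x, hu1 x, hu0 z, hu1 z]
    · have h1 : |u x - u z| ≤ |max 0 ((3*R/4 - dist x x₀) * (4/R))
          - max 0 ((3*R/4 - dist z x₀) * (4/R))| :=
        le_trans (abs_min_sub_min_le_max 1 _ 1 _) (max_le (by simp) le_rfl)
      have h2 : |max 0 ((3*R/4 - dist x x₀) * (4/R)) - max 0 ((3*R/4 - dist z x₀) * (4/R))|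
          ≤ |(3*R/4 - dist x x₀) * (4/R) - (3*R/4 - dist z x₀) * (4/R)| :=
        le_trans (abs_max_sub_max_le_max 0 _ 0 _) (max_le (by simp) le_rfl)
      have h3 : (3*R/4 - dist x x₀) * (4/R) - (3*R/4 - dist z x₀) * (4/R)
          = (dist z x₀ - dist x x₀) * (4/R) := by ring
      have h4 : |dist z x₀ - dist x x₀| ≤ dist x z := by
        rw [abs_sub_comm]
        exact abs_dist_sub_le x z x₀
      calc |u x - u z| ≤ |(3*R/4 - dist x x₀) * (4/R) - (3*R/4 - dist z x₀) * (4/R)| :=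
            le_trans h1 h2
        _ = |dist z x₀ - dist x x₀| * (4/R) := by
            rw [h3, abs_mul, abs_of_pos (by positivity : (0:ℝ) < 4/R)]
        _ ≤ dist x z * (4/R) := mul_le_mul_of_nonneg_right h4 (by positivity)
        _ = 4 * dist x z / R := by ring
  have hsupp : ∀ x : Z, R ≤ dist x x₀ → u x = 0 := by
    intro x hx
    have h1 : (3*R/4 - dist x x₀) * (4/R) ≤ 0 :=
      (mul_neg_of_neg_of_pos (by linarith) (by positivity)).le
    show min 1 (max 0 ((3*R/4 - dist x x₀) * (4/R))) = 0
    rw [max_eq_left h1, min_eq_right zero_le_one]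
  -- the test function, neighborhoods
  have hUex : ∃ U, IsOpen U ∧ closedBall x₀ r ⊆ U ∧ ∀ x ∈ U, 1 ≤ u x := by
    refine ⟨ball x₀ (R/2), isOpen_ball, fun w hw => mem_ball.mpr
      (lt_of_le_of_lt (mem_closedBall.mp hw) hrR), ?_⟩
    intro x hx
    rw [mem_ball] at hx
    have e : (R/4) * (4/R) = 1 := by field_simp
    have h1 : 1 ≤ (3*R/4 - dist x x₀) * (4/R) := by
      calc (1:ℝ) = (R/4) * (4/R) := e.symm
        _ ≤ (3*R/4 - dist x x₀) * (4/R) :=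
            mul_le_mul_of_nonneg_right (by linarith) (by positivity)
    exact le_min le_rfl (le_trans h1 (le_max_right _ _))
  have hVex : ∃ V, IsOpen V ∧ (univ \ ball x₀ R) ⊆ V ∧ ∀ x ∈ V, u x ≤ 0 := by
    refine ⟨{y : Z | 3*R/4 < dist y x₀},
      isOpen_lt continuous_const (continuous_id.dist continuous_const), ?_, ?_⟩
    · intro w hw
      have : R ≤ dist w x₀ := not_lt.mp (fun h => hw.2 (mem_ball.mpr h))
      show 3*R/4 < dist w x₀
      linarith
    · intro x hx
      have hx' : 3*R/4 < dist x x₀ := hx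
      have h1 : (3*R/4 - dist x x₀) * (4/R) ≤ 0 :=
        (mul_neg_of_neg_of_pos (by linarith) (by positivity)).le
      calc u x ≤ max 0 ((3*R/4 - dist x x₀) * (4/R)) := min_le_right _ _
        _ = 0 := max_eq_left h1
  -- energy estimate
  set fR : ℝ → ℝ := fun t => (min 1 (4 * t / R)) ^ p * t ^ (-(θ * p + Q)) with hfR_def
  have hfRm : Measurable fR := by
    apply Measurable.mul
    · exact Measurable.pow (measurable_const.min ((measurable_id.const_mul 4).div_const R))
        measurable_const
    · exact Measurable.pow measurable_id measurable_const
  set S : Set Z := ball x₀ R with hS_def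
  have hSmeas : MeasurableSet S := measurableSet_ball
  set G : Z → Z → ℝ≥0∞ := fun x z => ENNReal.ofReal CA * ENNReal.ofReal (fR (dist x z))
    with hG_def
  have hGm : Measurable (Function.uncurry G) :=
    (ENNReal.measurable_ofReal.comp (hfRm.comp measurable_dist)).const_mul _
  have hGxm : ∀ x : Z, Measurable (fun z => G x z) := fun x =>
    (ENNReal.measurable_ofReal.comp
      (hfRm.comp (continuous_const.dist continuous_id).measurable)).const_mul _
  have hK : ∀ x z : Z,
      ENNReal.ofReal (|u x - u z| ^ p / dist x z ^ (θ * p)) / ν (ball x (dist x z))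
        ≤ (if x ∈ S then G x z else 0) + (if z ∈ S then G x z else 0) := by
    intro x z
    by_cases hxz : x ∈ S ∨ z ∈ S
    · have hKG : ENNReal.ofReal (|u x - u z| ^ p / dist x z ^ (θ * p)) / ν (ball x (dist x z))
          ≤ G x z := by
        rcases eq_or_ne x z with rfl | hne'
        · simp [Real.zero_rpow hp0.ne']
        · have hd : 0 < dist x z := dist_pos.mpr hne'
          have hdD : dist x z < 2 * Metric.diam (Set.univ : Set Z) :=
            lt_of_le_of_lt (hub x z) (by linarith)
          have hlow : ENNReal.ofReal (dist x z ^ Q / CA) ≤ ν (ball x (dist x z)) :=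
            (hAhl x _ hd hdD).1
          have hnum : |u x - u z| ^ p / dist x z ^ (θ * p)
              ≤ (min 1 (4 * dist x z / R)) ^ p / dist x z ^ (θ * p) :=
            (div_le_div_iff_of_pos_right (Real.rpow_pos_of_pos hd _)).mpr
              (Real.rpow_le_rpow (abs_nonneg _) (hLip x z) hp0.le)
          have hCAp : (0:ℝ) < CA := by linarith
          have hb1 : (0:ℝ) < dist x z ^ (θ * p) := Real.rpow_pos_of_pos hd _
          have hb2 : (0:ℝ) < dist x z ^ Q := Real.rpow_pos_of_pos hd _
          calc ENNReal.ofReal (|u x - u z| ^ p / dist x z ^ (θ * p)) / ν (ball x (dist x z))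
              ≤ ENNReal.ofReal ((min 1 (4 * dist x z / R)) ^ p / dist x z ^ (θ * p))
                / ENNReal.ofReal (dist x z ^ Q / CA) :=
              ENNReal.div_le_div (ENNReal.ofReal_le_ofReal hnum) hlow
            _ = ENNReal.ofReal (((min 1 (4 * dist x z / R)) ^ p / dist x z ^ (θ * p))
                / (dist x z ^ Q / CA)) := (ENNReal.ofReal_div_of_pos (by positivity)).symm
            _ = ENNReal.ofReal (CA * fR (dist x z)) := by
                congr 1
                simp only [hfR_def]
                rw [Real.rpow_neg dist_nonneg, Real.rpow_add hd]
                field_simp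
            _ = G x z := by
                rw [hG_def]
                exact ENNReal.ofReal_mul hCAp.le
      rcases hxz with hx | hz
      · rw [if_pos hx]
        exact le_trans hKG le_self_add
      · rw [if_pos hz]
        exact le_trans hKG le_add_self
    · push_neg at hxz
      have hx0 : u x = 0 := hsupp x (not_lt.mp fun h => hxz.1 (mem_ball.mpr h))
      have hz0 : u z = 0 := hsupp z (not_lt.mp fun h => hxz.2 (mem_ball.mpr h))
      simp [hx0, hz0, Real.zero_rpow hp0.ne']
  -- the common bound for radial integrals
  have hM : ∀ c : Z, ∫⁻ w, G c w ∂ν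
      ≤ ENNReal.ofReal CA * ENNReal.ofReal (c₀ * R ^ (-(θ * p))) := by
    intro c
    have hfc : Measurable fun w : Z => ENNReal.ofReal (fR (dist c w)) :=
      ENNReal.measurable_ofReal.comp (hfRm.comp (continuous_const.dist continuous_id).measurable)
    simp only [hG_def]
    rw [lintegral_const_mul _ hfc]
    refine mul_le_mul_right ?_ _
    simpa only [hfR_def] using hrad R hR c
  set M : ℝ≥0∞ := ENNReal.ofReal CA * ENNReal.ofReal (c₀ * R ^ (-(θ * p))) with hM_def
  have hMS : M * ν S ≤ ENNReal.ofReal (CA^2 * c₀ * R ^ (Q - θ*p)) := by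
    calc M * ν S ≤ M * ENNReal.ofReal (CA * R ^ Q) := mul_le_mul_right (hB x₀ R hR) _
      _ = ENNReal.ofReal (CA * (c₀ * R ^ (-(θ * p))) * (CA * R ^ Q)) := by
          rw [hM_def, ← ENNReal.ofReal_mul (by linarith), ← ENNReal.ofReal_mul (by positivity)]
      _ = ENNReal.ofReal (CA^2 * c₀ * R ^ (Q - θ*p)) := by
          congr 1
          rw [show Q - θ*p = -(θ*p) + Q by ring, Real.rpow_add hR]
          ring
  have hE : besovEnergy ν θ p u ≤ ENNReal.ofReal (2 * CA^2 * c₀ * R ^ (Q - θ * p)) := by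
    have hsplit : ∀ x : Z, ∫⁻ z, ((if x ∈ S then G x z else 0) + (if z ∈ S then G x z else 0)) ∂ν
        = (if x ∈ S then ∫⁻ z, G x z ∂ν else 0) + ∫⁻ z, (if z ∈ S then G x z else 0) ∂ν := by
      intro x
      by_cases hx : x ∈ S
      · simp only [if_pos hx]
        exact lintegral_add_left (hGxm x) _
      · simp only [if_neg hx, zero_add]
    have hm1 : Measurable fun x => (if x ∈ S then ∫⁻ z, G x z ∂ν else 0) :=
      Measurable.ite hSmeas (Measurable.lintegral_prod_right hGm) measurable_const
    have hswapm : Measurable fun q : Z × Z => (if q.2 ∈ S then G q.1 q.2 else 0) :=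
      Measurable.ite (measurable_snd hSmeas) hGm measurable_const
    calc besovEnergy ν θ p u
        ≤ ∫⁻ x, ∫⁻ z, ((if x ∈ S then G x z else 0) + (if z ∈ S then G x z else 0)) ∂ν ∂ν :=
          lintegral_mono fun x => lintegral_mono fun z => hK x z
      _ = ∫⁻ x, ((if x ∈ S then ∫⁻ z, G x z ∂ν else 0)
            + ∫⁻ z, (if z ∈ S then G x z else 0) ∂ν) ∂ν := lintegral_congr hsplit
      _ = (∫⁻ x, (if x ∈ S then ∫⁻ z, G x z ∂ν else 0) ∂ν)
            + ∫⁻ x, ∫⁻ z, (if z ∈ S then G x z else 0) ∂ν ∂ν := lintegral_add_left hm1 _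
      _ ≤ M * ν S + M * ν S := by
          apply add_le_add
          · calc ∫⁻ x, (if x ∈ S then ∫⁻ z, G x z ∂ν else 0) ∂ν
                ≤ ∫⁻ x, (if x ∈ S then M else 0) ∂ν := by
                  apply lintegral_mono
                  intro x
                  dsimp only
                  split_ifs
                  · exact hM x
                  · exact le_rfl
              _ = M * ν S := by
                  rw [← lintegral_indicator_const hSmeas M]
                  apply lintegral_congr
                  intro x
                  rw [Set.indicator_apply]
          · calc ∫⁻ x, ∫⁻ z, (if z ∈ S then G x z else 0) ∂ν ∂ν
                = ∫⁻ z, ∫⁻ x, (if z ∈ S then G x z else 0) ∂ν ∂ν :=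
                  lintegral_lintegral_swap hswapm.aemeasurable
              _ ≤ ∫⁻ z, (if z ∈ S then M else 0) ∂ν := by
                  apply lintegral_mono
                  intro z
                  dsimp only
                  by_cases hz : z ∈ S
                  · simp only [if_pos hz]
                    calc ∫⁻ x, G x z ∂ν = ∫⁻ x, G z x ∂ν := by
                          apply lintegral_congr
                          intro x
                          rw [hG_def]
                          simp only
                          rw [dist_comm]
                      _ ≤ M := hM z
                  · simp only [if_neg hz, lintegral_zero]
                    exact le_rfl
              _ = M * ν S := by
                  rw [← lintegral_indicator_const hSmeas M]
                  apply lintegral_congr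
                  intro z
                  rw [Set.indicator_apply]
      _ ≤ ENNReal.ofReal (CA^2 * c₀ * R ^ (Q - θ*p)) + ENNReal.ofReal (CA^2 * c₀ * R ^ (Q - θ*p)) :=
          add_le_add hMS hMS
      _ = ENNReal.ofReal (2 * CA^2 * c₀ * R ^ (Q - θ * p)) := by
          rw [← ENNReal.ofReal_add (by positivity) (by positivity)]
          congr 1
          ring
  have hmem : MemBesov ν θ p u := ⟨hmemlp, lt_of_le_of_lt hE ENNReal.ofReal_lt_top⟩
  have hcap : besovCapacity ν θ p (closedBall x₀ r) (univ \ ball x₀ R) ≤ besovEnergy ν θ p u := by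
    apply iInf_le_of_le u
    apply iInf_le_of_le hmem
    apply iInf_le_of_le hUex
    exact iInf_le _ hVex
  refine le_trans hcap (le_trans hE (ENNReal.ofReal_le_ofReal ?_))
  have : (0:ℝ) ≤ R ^ (Q - θ * p) := Real.rpow_nonneg hR.le _
  nlinarith [sq_nonneg CA, hc₀]
end

section
/- Let (Z,d,ν) be a compact metric measure space, 0 < diam(Z) < 1, with ν Ahlfors Q-regular for some Q > 0. Let 1 < p < ∞ and 0 < θ < 1 with pθ < Q. Then there is a constant C > 0 (depending only on p, θ, Q and the Ahlfors regularity constant of ν) such that for every x₀ ∈ Z and all radii 0 < r < R/2, the relative Besov capacity satisfies cp_{B^θ_{p,p}(Z)}(B̄(x₀,r), Z \ B(x₀,R)) ≤ C · r^{Q−θp}. -/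
open MeasureTheory Metric Set
open scoped ENNReal

lemma measurable_rpow_const' (c : ℝ) : Measurable fun x : ℝ => x ^ c := by
  have h : ∀ x : ℝ, x ^ c =
      if x = 0 then (if c = 0 then 1 else 0)
      else if x < 0 then Real.exp (Real.log x * c) * Real.cos (c * Real.pi)
      else Real.exp (Real.log x * c) := by
    intro x
    rcases lt_trichotomy x 0 with hx | hx | hx
    · rw [if_neg hx.ne, if_pos hx, Real.rpow_def_of_neg hx]
    · subst hx
      rw [if_pos rfl]
      by_cases hc : c = 0
      · simp [hc]
      · simp [hc, Real.zero_rpow hc]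
    · rw [if_neg hx.ne', if_neg (not_lt.2 hx.le), Real.rpow_def_of_pos hx]
  simp_rw [h]
  exact Measurable.ite (measurableSet_eq) measurable_const
    (Measurable.ite (measurableSet_lt measurable_id measurable_const)
      ((Real.measurable_exp.comp (Real.measurable_log.mul measurable_const)).mul
        measurable_const)
      (Real.measurable_exp.comp (Real.measurable_log.mul measurable_const)))

lemma tail_lintegral_rpow {β T M : ℝ} (hβ : 1 < β) (hT : 0 < T) (hM : 0 ≤ M) :
    ∫⁻ t in Set.Ioi T, ENNReal.ofReal (M * t ^ (-β)) ≤
      ENNReal.ofReal (M * (T ^ (1 - β) / (β - 1))) := by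
  have hint : MeasureTheory.IntegrableOn (fun t : ℝ => t ^ (-β)) (Set.Ioi T) :=
    integrableOn_Ioi_rpow_of_lt (by linarith) hT
  have hnn : 0 ≤ᵐ[volume.restrict (Set.Ioi T)] fun t : ℝ => t ^ (-β) := by
    filter_upwards [MeasureTheory.ae_restrict_mem measurableSet_Ioi] with t ht
    exact Real.rpow_nonneg (le_of_lt (hT.trans ht)) _
  calc ∫⁻ t in Set.Ioi T, ENNReal.ofReal (M * t ^ (-β))
      = ∫⁻ t in Set.Ioi T, ENNReal.ofReal M * ENNReal.ofReal (t ^ (-β)) := by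
        simp_rw [ENNReal.ofReal_mul hM]
    _ = ENNReal.ofReal M * ∫⁻ t in Set.Ioi T, ENNReal.ofReal (t ^ (-β)) :=
        lintegral_const_mul' _ _ ENNReal.ofReal_ne_top
    _ = ENNReal.ofReal M * ENNReal.ofReal (∫ t in Set.Ioi T, t ^ (-β)) := by
        rw [MeasureTheory.ofReal_integral_eq_lintegral_ofReal hint hnn]
    _ ≤ _ := by
        rw [integral_Ioi_rpow_of_lt (by linarith) hT, ← ENNReal.ofReal_mul hM]
        apply ENNReal.ofReal_le_ofReal
        apply mul_le_mul_of_nonneg_left _ hM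
        rw [show (-β + 1 : ℝ) = 1 - β by ring, ← neg_div_neg_eq, neg_neg,
          show -(1 - β) = β - 1 by ring]

lemma head_lintegral_rpow {β T M : ℝ} (hβ : β < 1) (hT : 0 < T) (hM : 0 ≤ M) :
    ∫⁻ t in Set.Ioc 0 T, ENNReal.ofReal (M * t ^ (-β)) ≤
      ENNReal.ofReal (M * (T ^ (1 - β) / (1 - β))) := by
  have hint : MeasureTheory.IntegrableOn (fun t : ℝ => t ^ (-β)) (Set.Ioc 0 T) :=
    (intervalIntegrable_iff_integrableOn_Ioc_of_le hT.le).1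
      (intervalIntegral.intervalIntegrable_rpow' (by linarith))
  have hnn : 0 ≤ᵐ[volume.restrict (Set.Ioc 0 T)] fun t : ℝ => t ^ (-β) := by
    filter_upwards [MeasureTheory.ae_restrict_mem measurableSet_Ioc] with t ht
    exact Real.rpow_nonneg ht.1.le _
  calc ∫⁻ t in Set.Ioc 0 T, ENNReal.ofReal (M * t ^ (-β))
      = ∫⁻ t in Set.Ioc 0 T, ENNReal.ofReal M * ENNReal.ofReal (t ^ (-β)) := by
        simp_rw [ENNReal.ofReal_mul hM]
    _ = ENNReal.ofReal M * ∫⁻ t in Set.Ioc 0 T, ENNReal.ofReal (t ^ (-β)) :=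
        lintegral_const_mul' _ _ ENNReal.ofReal_ne_top
    _ = ENNReal.ofReal M * ENNReal.ofReal (∫ t in Set.Ioc 0 T, t ^ (-β)) := by
        rw [MeasureTheory.ofReal_integral_eq_lintegral_ofReal hint hnn]
    _ ≤ _ := by
        rw [← intervalIntegral.integral_of_le hT.le,
          integral_rpow (Or.inl (by linarith : (-1 : ℝ) < -β)),
          Real.zero_rpow (by linarith : (-β + 1 : ℝ) ≠ 0), sub_zero,
          ← ENNReal.ofReal_mul hM]
        apply ENNReal.ofReal_le_ofReal
        apply mul_le_mul_of_nonneg_left _ hM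
        rw [show (-β + 1 : ℝ) = 1 - β by ring]

/-- Near-diagonal integral bound via the layer cake formula. -/
lemma near_integral_bound {Z : Type*} [MetricSpace Z] [MeasurableSpace Z]
    [OpensMeasurableSpace Z]
    (ν : Measure Z) (CA Q α : ℝ) (hCA : 0 < CA) (hQ : 0 < Q)
    (hA : ∀ (x : Z) (s : ℝ), 0 < s → ν (ball x s) ≤ ENNReal.ofReal (CA * s ^ Q))
    (hα0 : 0 < α) (hαQ : α < Q) (x : Z) (ρ : ℝ) (hρ : 0 < ρ) :
    ∫⁻ z, ENNReal.ofReal (if dist x z < ρ then dist x z ^ (-α) else 0) ∂ν ≤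
      ENNReal.ofReal ((CA + CA * (α / (Q - α))) * ρ ^ (Q - α)) := by
  set β : ℝ := Q / α with hβdef
  have hβ : 1 < β := (one_lt_div hα0).2 hαQ
  set T : ℝ := ρ ^ (-α) with hTdef
  have hT : 0 < T := Real.rpow_pos_of_pos hρ _
  set f : Z → ℝ := fun z => if dist x z < ρ then dist x z ^ (-α) else 0 with hfdef
  have f_nn : 0 ≤ᵐ[ν] f := Filter.Eventually.of_forall fun z => by
    by_cases h : dist x z < ρ <;>
      simp [hfdef, h, Real.rpow_nonneg dist_nonneg]
  have hdm : Measurable fun z : Z => dist x z :=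
    (continuous_const.dist continuous_id).measurable
  have f_mble : AEMeasurable f ν := by
    refine Measurable.aemeasurable ?_
    exact Measurable.ite (measurableSet_lt hdm measurable_const)
      ((measurable_rpow_const' (-α)).comp hdm) measurable_const
  rw [lintegral_eq_lintegral_meas_lt ν f_nn f_mble]
  set g : ℝ → ℝ≥0∞ := fun t =>
    if t ≤ T then ENNReal.ofReal (CA * ρ ^ Q) else ENNReal.ofReal (CA * t ^ (-β))
    with hgdef
  have g_mble : Measurable g :=
    Measurable.ite (measurableSet_le measurable_id measurable_const) measurable_const
      (ENNReal.measurable_ofReal.comp (measurable_const.mul (measurable_rpow_const' (-β))))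
  have key : ∀ t ∈ Set.Ioi (0:ℝ), ν {z | t < f z} ≤ g t := by
    intro t ht
    have ht0 : (0:ℝ) < t := ht
    have hsub : ∀ z, t < f z → dist x z < ρ ∧ 0 < dist x z ∧ t < dist x z ^ (-α) := by
      intro z hz
      by_cases h : dist x z < ρ
      · have hfz : f z = dist x z ^ (-α) := if_pos h
        rw [hfz] at hz
        refine ⟨h, ?_, hz⟩
        rcases eq_or_lt_of_le (dist_nonneg : (0:ℝ) ≤ dist x z) with h0 | h0
        · exfalso
          rw [← h0, Real.zero_rpow (neg_ne_zero.2 hα0.ne')] at hz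
          exact absurd hz (not_lt.2 ht0.le)
        · exact h0
      · exfalso
        have hfz : f z = 0 := if_neg h
        rw [hfz] at hz
        exact absurd hz (not_lt.2 ht0.le)
    by_cases hcase : t ≤ T
    · have hg : g t = ENNReal.ofReal (CA * ρ ^ Q) := if_pos hcase
      rw [hg]
      refine le_trans (measure_mono ?_) (hA x ρ hρ)
      intro z hz
      exact mem_ball'.2 (hsub z hz).1
    · have hg : g t = ENNReal.ofReal (CA * t ^ (-β)) := if_neg hcase
      rw [hg]
      have hsub2 : {z | t < f z} ⊆ ball x (t ^ (-(1/α))) := by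
        intro z hz
        obtain ⟨-, hd0, hdt⟩ := hsub z hz
        have h2 := Real.rpow_lt_rpow_of_neg ht0 hdt
          (neg_lt_zero.2 (by positivity) : -(1/α) < 0)
        rw [← Real.rpow_mul dist_nonneg, show (-α) * (-(1/α)) = 1 by field_simp,
          Real.rpow_one] at h2
        exact mem_ball'.2 h2
      refine le_trans (measure_mono hsub2)
        (le_trans (hA x _ (Real.rpow_pos_of_pos ht0 _)) (le_of_eq ?_))
      rw [← Real.rpow_mul ht0.le]
      simp only [hβdef]
      congr 2
      ring
  have hβ1 : (0:ℝ) < β - 1 := by linarith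
  have hQα : Q - α ≠ 0 := sub_ne_zero.2 hαQ.ne'
  have e1 : ρ ^ Q * ρ ^ (-α) = ρ ^ (Q - α) := by
    rw [← Real.rpow_add hρ, sub_eq_add_neg]
  have e2 : T ^ (1 - β) = ρ ^ (Q - α) := by
    rw [hTdef, ← Real.rpow_mul hρ.le]
    congr 1
    simp only [hβdef]
    field_simp
    ring
  have e3 : (β - 1)⁻¹ = α / (Q - α) := by
    simp only [hβdef]
    rw [div_sub' hα0.ne', inv_div]
    congr 1
    ring
  have e4 : T ^ (1 - β) / (β - 1) = α / (Q - α) * ρ ^ (Q - α) := by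
    rw [e2, div_eq_mul_inv, e3]; ring
  calc ∫⁻ t in Set.Ioi (0:ℝ), ν {z | t < f z}
      ≤ ∫⁻ t in Set.Ioi (0:ℝ), g t := setLIntegral_mono g_mble key
    _ = (∫⁻ t in Set.Ioc 0 T, g t) + ∫⁻ t in Set.Ioi T, g t := by
        rw [← Set.Ioc_union_Ioi_eq_Ioi hT.le,
          lintegral_union measurableSet_Ioi Set.Ioc_disjoint_Ioi_same]
    _ ≤ ENNReal.ofReal (CA * ρ ^ Q * T) +
        ENNReal.ofReal (CA * (T ^ (1 - β) / (β - 1))) := by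
        refine add_le_add ?_ ?_
        · have : ∀ t ∈ Set.Ioc (0:ℝ) T, g t ≤ ENNReal.ofReal (CA * ρ ^ Q) := by
            intro t ht
            exact le_of_eq (by simp only [hgdef]; rw [if_pos ht.2])
          refine le_trans (setLIntegral_mono measurable_const this) ?_
          rw [setLIntegral_const, Real.volume_Ioc, sub_zero,
            ← ENNReal.ofReal_mul (by positivity)]
        · have : ∀ t ∈ Set.Ioi T, g t ≤ ENNReal.ofReal (CA * t ^ (-β)) := by
            intro t ht
            exact le_of_eq (by simp only [hgdef]; rw [if_neg (not_le.2 ht)])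
          refine le_trans (setLIntegral_mono ?_ this) (tail_lintegral_rpow hβ hT hCA.le)
          exact ENNReal.measurable_ofReal.comp
            (measurable_const.mul (measurable_rpow_const' (-β)))
    _ ≤ _ := by
        rw [← ENNReal.ofReal_add (by positivity) (by positivity)]
        apply ENNReal.ofReal_le_ofReal
        apply le_of_eq
        rw [e4, mul_assoc, hTdef, e1]
        ring

/-- Far-range integral bound via the layer cake formula. -/
lemma far_integral_bound {Z : Type*} [MetricSpace Z] [MeasurableSpace Z]
    [OpensMeasurableSpace Z]
    (ν : Measure Z) (CA Q α : ℝ) (hCA : 0 < CA) (hQ : 0 < Q)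
    (hA : ∀ (x : Z) (s : ℝ), 0 < s → ν (ball x s) ≤ ENNReal.ofReal (CA * s ^ Q))
    (hαQ : Q < α) (x : Z) (ρ : ℝ) (hρ : 0 < ρ) :
    ∫⁻ z, ENNReal.ofReal (if ρ ≤ dist x z then dist x z ^ (-α) else 0) ∂ν ≤
      ENNReal.ofReal ((CA * (α / (α - Q))) * ρ ^ (Q - α)) := by
  have hα0 : 0 < α := hQ.trans hαQ
  set β : ℝ := Q / α with hβdef
  have hβ : β < 1 := (div_lt_one hα0).2 hαQ
  have hβ0 : 0 < β := div_pos hQ hα0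
  set T : ℝ := ρ ^ (-α) with hTdef
  have hT : 0 < T := Real.rpow_pos_of_pos hρ _
  set f : Z → ℝ := fun z => if ρ ≤ dist x z then dist x z ^ (-α) else 0 with hfdef
  have f_nn : 0 ≤ᵐ[ν] f := Filter.Eventually.of_forall fun z => by
    by_cases h : ρ ≤ dist x z <;>
      simp [hfdef, h, Real.rpow_nonneg dist_nonneg]
  have hdm : Measurable fun z : Z => dist x z :=
    (continuous_const.dist continuous_id).measurable
  have f_mble : AEMeasurable f ν := by
    refine Measurable.aemeasurable ?_
    exact Measurable.ite (measurableSet_le measurable_const hdm)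
      ((measurable_rpow_const' (-α)).comp hdm) measurable_const
  rw [lintegral_eq_lintegral_meas_lt ν f_nn f_mble]
  set g : ℝ → ℝ≥0∞ := fun t =>
    if t ≤ T then ENNReal.ofReal (CA * t ^ (-β)) else 0 with hgdef
  have g_mble : Measurable g :=
    Measurable.ite (measurableSet_le measurable_id measurable_const)
      (ENNReal.measurable_ofReal.comp (measurable_const.mul (measurable_rpow_const' (-β))))
      measurable_const
  have key : ∀ t ∈ Set.Ioi (0:ℝ), ν {z | t < f z} ≤ g t := by
    intro t ht
    have ht0 : (0:ℝ) < t := ht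
    have hsub : ∀ z, t < f z → ρ ≤ dist x z ∧ t < dist x z ^ (-α) := by
      intro z hz
      by_cases h : ρ ≤ dist x z
      · have hfz : f z = dist x z ^ (-α) := if_pos h
        rw [hfz] at hz
        exact ⟨h, hz⟩
      · exfalso
        have hfz : f z = 0 := if_neg h
        rw [hfz] at hz
        exact absurd hz (not_lt.2 ht0.le)
    by_cases hcase : t ≤ T
    · have hg : g t = ENNReal.ofReal (CA * t ^ (-β)) := if_pos hcase
      rw [hg]
      have hsub2 : {z | t < f z} ⊆ ball x (t ^ (-(1/α))) := by
        intro z hz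
        obtain ⟨hd1, hdt⟩ := hsub z hz
        have hd0 : 0 < dist x z := lt_of_lt_of_le hρ hd1
        have h2 := Real.rpow_lt_rpow_of_neg ht0 hdt
          (neg_lt_zero.2 (by positivity) : -(1/α) < 0)
        rw [← Real.rpow_mul dist_nonneg, show (-α) * (-(1/α)) = 1 by field_simp,
          Real.rpow_one] at h2
        exact mem_ball'.2 h2
      refine le_trans (measure_mono hsub2)
        (le_trans (hA x _ (Real.rpow_pos_of_pos ht0 _)) (le_of_eq ?_))
      rw [← Real.rpow_mul ht0.le]
      simp only [hβdef]
      congr 2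
      ring
    · have hg : g t = 0 := if_neg hcase
      rw [hg]
      have hempty : {z | t < f z} = (∅ : Set Z) := by
        refine Set.eq_empty_iff_forall_notMem.2 fun z hz => ?_
        obtain ⟨hd1, hdt⟩ := hsub z hz
        have hle : dist x z ^ (-α) ≤ ρ ^ (-α) :=
          Real.rpow_le_rpow_of_nonpos hρ hd1 (neg_nonpos.2 hα0.le)
        exact hcase (le_of_lt (lt_of_lt_of_le hdt hle))
      rw [hempty, measure_empty]
  calc ∫⁻ t in Set.Ioi (0:ℝ), ν {z | t < f z}
      ≤ ∫⁻ t in Set.Ioi (0:ℝ), g t := setLIntegral_mono g_mble key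
    _ = (∫⁻ t in Set.Ioc 0 T, g t) + ∫⁻ t in Set.Ioi T, g t := by
        rw [← Set.Ioc_union_Ioi_eq_Ioi hT.le,
          lintegral_union measurableSet_Ioi Set.Ioc_disjoint_Ioi_same]
    _ ≤ ENNReal.ofReal (CA * (T ^ (1 - β) / (1 - β))) + 0 := by
        refine add_le_add ?_ ?_
        · have hb : ∀ t ∈ Set.Ioc (0:ℝ) T, g t ≤ ENNReal.ofReal (CA * t ^ (-β)) := by
            intro t ht
            exact le_of_eq (by simp only [hgdef]; rw [if_pos ht.2])
          refine le_trans (setLIntegral_mono ?_ hb) (head_lintegral_rpow hβ hT hCA.le)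
          exact ENNReal.measurable_ofReal.comp
            (measurable_const.mul (measurable_rpow_const' (-β)))
        · have hb : ∀ t ∈ Set.Ioi T, g t ≤ 0 := by
            intro t ht
            exact le_of_eq (by simp only [hgdef]; rw [if_neg (not_le.2 ht)])
          refine le_trans (setLIntegral_mono measurable_const hb) ?_
          simp
    _ ≤ _ := by
        rw [add_zero]
        apply ENNReal.ofReal_le_ofReal
        apply le_of_eq
        have e2 : T ^ (1 - β) = ρ ^ (Q - α) := by
          rw [hTdef, ← Real.rpow_mul hρ.le]
          congr 1
          simp only [hβdef]
          field_simp
          ring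
        have e3 : (1 - β)⁻¹ = α / (α - Q) := by
          simp only [hβdef]
          rw [sub_div' hα0.ne', inv_div]
          congr 1
          ring
        rw [e2, div_eq_mul_inv, e3]
        ring

/-- global upper ball bound -/
lemma ball_bound_global {Z : Type*} [MetricSpace Z] [CompactSpace Z] [MeasurableSpace Z]
    (ν : Measure Z) (Q CA : ℝ) (hQ : 0 < Q)
    (hdiam0 : 0 < Metric.diam (Set.univ : Set Z))
    (hreg : IsAhlforsRegular ν Q CA) :
    ∀ (x : Z) (s : ℝ), 0 < s → ν (ball x s) ≤ ENNReal.ofReal (CA * s ^ Q) := by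
  intro x s hs
  set D := Metric.diam (Set.univ : Set Z) with hD
  by_cases h : s < 2 * D
  · exact (hreg.2 x s hs h).2
  · push_neg at h
    have hcover : (univ : Set Z) ⊆ ball x (3/2 * D) := by
      intro y _
      exact mem_ball.2 (lt_of_le_of_lt
        (dist_le_diam_of_mem isCompact_univ.isBounded trivial trivial) (by linarith))
    calc ν (ball x s) ≤ ν (ball x (3/2 * D)) := by
          refine measure_mono (subset_trans (subset_univ _) hcover)
      _ ≤ ENNReal.ofReal (CA * (3/2 * D) ^ Q) :=
          (hreg.2 x _ (by linarith) (by linarith)).2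
      _ ≤ ENNReal.ofReal (CA * s ^ Q) := by
          apply ENNReal.ofReal_le_ofReal
          have h1 : (0:ℝ) < CA := lt_of_lt_of_le zero_lt_one hreg.1
          apply mul_le_mul_of_nonneg_left _ h1.le
          exact Real.rpow_le_rpow (by linarith) (by linarith) hQ.le

theorem besov_capacity_annulus_upper_subcritical
    {Z : Type*} [MetricSpace Z] [CompactSpace Z] [MeasurableSpace Z] [BorelSpace Z]
    (ν : Measure Z) (Q CA p θ : ℝ)
    (hdiam0 : 0 < Metric.diam (Set.univ : Set Z))
    (hdiam1 : Metric.diam (Set.univ : Set Z) < 1)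
    (hQ : 0 < Q) (hreg : IsAhlforsRegular ν Q CA)
    (hp : 1 < p) (hθ0 : 0 < θ) (hθ1 : θ < 1) (hpθ : p * θ < Q) :
    ∃ C > 0, ∀ (x₀ : Z) (r R : ℝ), 0 < r → r < R / 2 →
      besovCapacity ν θ p (closedBall x₀ r) (univ \ ball x₀ R) ≤
        ENNReal.ofReal (C * r ^ (Q - θ * p)) := by
  -- basic positivity facts
  have hp0 : (0:ℝ) < p := lt_trans zero_lt_one hp
  have hCA : (0:ℝ) < CA := lt_of_lt_of_le zero_lt_one hreg.1
  have hθp : (0:ℝ) < θ * p := mul_pos hθ0 hp0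
  have hθpp : θ * p < p := by nlinarith
  have hθpQ : θ * p < Q := by nlinarith
  -- exponents
  set ε : ℝ := θ * p + min (p - θ * p) Q / 2 with hε
  have hmin : (0:ℝ) < min (p - θ * p) Q := lt_min (by linarith) hQ
  have hε1 : θ * p < ε := by rw [hε]; linarith
  have hε2 : ε ≤ p := by
    rw [hε]
    have := min_le_left (p - θ * p) Q
    linarith
  have hε3 : ε < θ * p + Q := by
    rw [hε]
    have := min_le_right (p - θ * p) Q
    linarith
  have hε0 : 0 < ε := lt_trans hθp hε1
  set α1 : ℝ := Q + θ * p - ε with hα1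
  have hα1pos : 0 < α1 := by rw [hα1]; linarith
  have hα1Q : α1 < Q := by rw [hα1]; linarith
  set a : ℝ := Q + θ * p with ha
  have haQ : Q < a := by rw [ha]; linarith
  -- constants
  set KB : ℝ := CA + CA * (α1 / (Q - α1)) with hKB
  set KC : ℝ := CA * (a / (a - Q)) with hKC
  have hKBpos : 0 < KB := by
    rw [hKB]
    have : 0 < α1 / (Q - α1) := div_pos hα1pos (by linarith)
    positivity
  have hKCpos : 0 < KC := by
    rw [hKC]
    have : 0 < a / (a - Q) := div_pos (by linarith) (by linarith)
    positivity
  set KI : ℝ := CA * (KB * 2 ^ ε + KC) with hKI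
  have hKIpos : 0 < KI := by
    rw [hKI]
    have h2ε : (0:ℝ) < 2 ^ ε := Real.rpow_pos_of_pos (by norm_num) _
    positivity
  set C : ℝ := 2 * (CA * 2 ^ Q) * KI with hC
  have hCpos : 0 < C := by
    rw [hC]
    have h2Q : (0:ℝ) < 2 ^ Q := Real.rpow_pos_of_pos (by norm_num) _
    positivity
  refine ⟨C, hCpos, ?_⟩
  intro x₀ r R hr hrR
  -- geometry and finiteness
  set D := Metric.diam (Set.univ : Set Z) with hD
  have hA : ∀ (x : Z) (s : ℝ), 0 < s → ν (ball x s) ≤ ENNReal.ofReal (CA * s ^ Q) :=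
    ball_bound_global ν Q CA hQ hdiam0 hreg
  have hZne : Nonempty Z := by
    by_contra h
    rw [not_nonempty_iff] at h
    have hD0 : D = 0 := by rw [hD, Set.univ_eq_empty_iff.2 h, Metric.diam_empty]
    linarith
  obtain ⟨x₁⟩ := hZne
  haveI : IsFiniteMeasure ν := by
    constructor
    calc ν univ ≤ ν (ball x₁ (3/2 * D)) := measure_mono (fun y _ => mem_ball.2
          (lt_of_le_of_lt (dist_le_diam_of_mem isCompact_univ.isBounded trivial trivial)
            (by linarith)))
      _ ≤ ENNReal.ofReal (CA * (3/2*D)^Q) := hA _ _ (by linarith)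
      _ < ⊤ := ENNReal.ofReal_lt_top
  -- the test function
  set u : Z → ℝ := fun x => min 1 (max 0 ((2*r - dist x x₀) * (2/r))) with hu
  have hu0 : ∀ x, 0 ≤ u x := fun x => le_min zero_le_one (le_max_left _ _)
  have hu1 : ∀ x, u x ≤ 1 := fun x => min_le_left _ _
  have huzero : ∀ x, 2*r ≤ dist x x₀ → u x = 0 := by
    intro x hx
    have h1 : (2*r - dist x x₀) * (2/r) ≤ 0 :=
      mul_nonpos_of_nonpos_of_nonneg (by linarith) (by positivity)
    simp only [hu]
    rw [max_eq_left h1, min_eq_right zero_le_one]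
  have hulip : ∀ x z, |u x - u z| ≤ 2/r * dist x z := by
    intro x z
    have h1 : |u x - u z| ≤
        |max 0 ((2*r - dist x x₀) * (2/r)) - max 0 ((2*r - dist z x₀) * (2/r))| := by
      calc |u x - u z|
          = |min 1 (max 0 ((2*r - dist x x₀) * (2/r))) -
              min 1 (max 0 ((2*r - dist z x₀) * (2/r)))| := by rw [hu]
        _ ≤ max |1 - 1| |max 0 ((2*r - dist x x₀) * (2/r)) -
              max 0 ((2*r - dist z x₀) * (2/r))| := abs_min_sub_min_le_max _ _ _ _
        _ = |max 0 ((2*r - dist x x₀) * (2/r)) - max 0 ((2*r - dist z x₀) * (2/r))| := by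
            simp
    refine le_trans h1 ?_
    rw [max_comm 0 ((2*r - dist x x₀) * (2/r)), max_comm 0 ((2*r - dist z x₀) * (2/r))]
    refine le_trans (abs_max_sub_max_le_abs _ _ _) ?_
    rw [← sub_mul, abs_mul]
    have h2 : |2*r - dist x x₀ - (2*r - dist z x₀)| = |dist z x₀ - dist x x₀| := by
      congr 1; ring
    rw [h2, abs_of_pos (by positivity : (0:ℝ) < 2/r), mul_comm]
    apply mul_le_mul_of_nonneg_left _ (by positivity : (0:ℝ) ≤ 2/r)
    calc |dist z x₀ - dist x x₀| ≤ dist z x := abs_dist_sub_le z x x₀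
      _ = dist x z := dist_comm z x
  -- the majorant kernel
  set H : ℝ → ℝ≥0∞ := fun d =>
    ENNReal.ofReal (CA * (if d < r then (2/r) ^ ε * d ^ (-α1) else d ^ (-a))) with hH
  have hdistD : ∀ x z : Z, dist x z ≤ D :=
    fun x z => dist_le_diam_of_mem isCompact_univ.isBounded trivial trivial
  -- core pointwise bound
  have hcore : ∀ x z : Z,
      ENNReal.ofReal (|u x - u z| ^ p / dist x z ^ (θ * p)) / ν (ball x (dist x z)) ≤
        H (dist x z) := by
    intro x z
    rcases eq_or_lt_of_le (dist_nonneg : (0:ℝ) ≤ dist x z) with hd0 | hd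
    · have hxz : x = z := dist_eq_zero.1 hd0.symm
      subst hxz
      simp [Real.zero_rpow hp0.ne', ENNReal.zero_div]
    · set d := dist x z with hdd
      have hdD : d < 2 * D := lt_of_le_of_lt (hdistD x z) (by linarith)
      have hlow := (hreg.2 x d hd hdD).1
      have hpos : (0:ℝ) < d ^ Q / CA := div_pos (Real.rpow_pos_of_pos hd _) hCA
      have hm0 : 0 ≤ |u x - u z| := abs_nonneg _
      have hm1 : |u x - u z| ≤ 1 := by
        have h01 := hu0 x; have h02 := hu1 x; have h03 := hu0 z; have h04 := hu1 z
        rw [abs_le]; constructor <;> linarith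
      have hm2 : |u x - u z| ≤ 2/r * d := hulip x z
      have hdQ : (0:ℝ) < d ^ Q := Real.rpow_pos_of_pos hd _
      have hdθp : (0:ℝ) < d ^ (θ * p) := Real.rpow_pos_of_pos hd _
      calc ENNReal.ofReal (|u x - u z| ^ p / d ^ (θ * p)) / ν (ball x d)
          ≤ ENNReal.ofReal (|u x - u z| ^ p / d ^ (θ * p)) / ENNReal.ofReal (d ^ Q / CA) :=
            ENNReal.div_le_div_left hlow _
        _ = ENNReal.ofReal (|u x - u z| ^ p / d ^ (θ * p) / (d ^ Q / CA)) :=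
            (ENNReal.ofReal_div_of_pos hpos).symm
        _ ≤ H d := by
            simp only [hH]
            apply ENNReal.ofReal_le_ofReal
            by_cases hdr : d < r
            · rw [if_pos hdr]
              have key : |u x - u z| ^ p ≤ (2/r * d) ^ ε := by
                by_cases hs : 2/r * d ≤ 1
                · calc |u x - u z| ^ p ≤ (2/r * d) ^ p :=
                      Real.rpow_le_rpow hm0 hm2 hp0.le
                    _ ≤ (2/r * d) ^ ε :=
                      Real.rpow_le_rpow_of_exponent_ge (by positivity) hs hε2
                · push_neg at hs
                  calc |u x - u z| ^ p ≤ 1 := Real.rpow_le_one hm0 hm1 hp0.le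
                    _ ≤ (2/r * d) ^ ε := Real.one_le_rpow hs.le hε0.le
              have e1 : d ^ (-α1) = d ^ ε / (d ^ (θ * p) * d ^ Q) := by
                rw [← Real.rpow_add hd, ← Real.rpow_sub hd]
                congr 1
                rw [hα1, ha]; ring
              calc |u x - u z| ^ p / d ^ (θ * p) / (d ^ Q / CA)
                  = CA * (|u x - u z| ^ p / (d ^ (θ * p) * d ^ Q)) := by
                    field_simp
                _ ≤ CA * ((2/r * d) ^ ε / (d ^ (θ * p) * d ^ Q)) := by
                    apply mul_le_mul_of_nonneg_left _ hCA.le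
                    exact (div_le_div_iff_of_pos_right (by positivity)).2 key
                _ = CA * ((2/r) ^ ε * d ^ (-α1)) := by
                    rw [e1, Real.mul_rpow (by positivity) hd.le]
                    ring
            · rw [if_neg hdr]
              have key : |u x - u z| ^ p ≤ 1 := Real.rpow_le_one hm0 hm1 hp0.le
              have e1 : d ^ (-a) = 1 / (d ^ (θ * p) * d ^ Q) := by
                rw [← Real.rpow_add hd, one_div, ← Real.rpow_neg hd.le]
                congr 1
                rw [ha]; ring
              calc |u x - u z| ^ p / d ^ (θ * p) / (d ^ Q / CA)
                  = CA * (|u x - u z| ^ p / (d ^ (θ * p) * d ^ Q)) := by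
                    field_simp
                _ ≤ CA * (1 / (d ^ (θ * p) * d ^ Q)) := by
                    apply mul_le_mul_of_nonneg_left _ hCA.le
                    exact (div_le_div_iff_of_pos_right (by positivity)).2 key
                _ = CA * d ^ (-a) := by rw [e1]
  -- splitting the kernel
  have hHsplit : ∀ dd : ℝ, H dd =
      ENNReal.ofReal (CA * (2/r) ^ ε) *
        ENNReal.ofReal (if dd < r then dd ^ (-α1) else 0) +
      ENNReal.ofReal CA * ENNReal.ofReal (if r ≤ dd then dd ^ (-a) else 0) := by
    intro dd
    simp only [hH]
    by_cases hdr : dd < r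
    · rw [if_pos hdr, if_pos hdr, if_neg (not_le.2 hdr), ENNReal.ofReal_zero, mul_zero,
        add_zero, ← ENNReal.ofReal_mul (by positivity)]
      congr 1
      ring
    · rw [if_neg hdr, if_neg hdr, if_pos (not_lt.1 hdr), ENNReal.ofReal_zero, mul_zero,
        zero_add, ← ENNReal.ofReal_mul hCA.le]
  -- inner integral bound
  have hinner : ∀ x : Z, ∫⁻ z, H (dist x z) ∂ν ≤ ENNReal.ofReal (KI * r ^ (-(θ * p))) := by
    intro x
    have hdm : Measurable fun z : Z => dist x z :=
      (continuous_const.dist continuous_id).measurable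
    have hm1 : Measurable fun z : Z =>
        ENNReal.ofReal (if dist x z < r then dist x z ^ (-α1) else 0) :=
      ENNReal.measurable_ofReal.comp (Measurable.ite (hdm measurableSet_Iio)
        ((measurable_rpow_const' (-α1)).comp hdm) measurable_const)
    calc ∫⁻ z, H (dist x z) ∂ν
        = ∫⁻ z, (ENNReal.ofReal (CA * (2/r) ^ ε) *
            ENNReal.ofReal (if dist x z < r then dist x z ^ (-α1) else 0) +
            ENNReal.ofReal CA *
            ENNReal.ofReal (if r ≤ dist x z then dist x z ^ (-a) else 0)) ∂ν :=
          lintegral_congr fun z => hHsplit (dist x z)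
      _ = ENNReal.ofReal (CA * (2/r) ^ ε) *
            ∫⁻ z, ENNReal.ofReal (if dist x z < r then dist x z ^ (-α1) else 0) ∂ν +
          ENNReal.ofReal CA *
            ∫⁻ z, ENNReal.ofReal (if r ≤ dist x z then dist x z ^ (-a) else 0) ∂ν := by
          rw [lintegral_add_left (hm1.const_mul _),
            lintegral_const_mul' _ _ ENNReal.ofReal_ne_top,
            lintegral_const_mul' _ _ ENNReal.ofReal_ne_top]
      _ ≤ ENNReal.ofReal (CA * (2/r) ^ ε) * ENNReal.ofReal (KB * r ^ (Q - α1)) +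
          ENNReal.ofReal CA * ENNReal.ofReal (KC * r ^ (Q - a)) :=
          add_le_add
            (mul_le_mul_right (near_integral_bound ν CA Q α1 hCA hQ hA hα1pos hα1Q x r hr) _)
            (mul_le_mul_right (far_integral_bound ν CA Q a hCA hQ hA haQ x r hr) _)
      _ ≤ ENNReal.ofReal (KI * r ^ (-(θ * p))) := by
          rw [← ENNReal.ofReal_mul (by positivity), ← ENNReal.ofReal_mul hCA.le,
            ← ENNReal.ofReal_add (by positivity) (by positivity)]
          apply ENNReal.ofReal_le_ofReal
          apply le_of_eq
          have hrε : (0:ℝ) < r ^ ε := Real.rpow_pos_of_pos hr _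
          have e1 : r ^ (Q - α1) = r ^ (-(θ*p)) * r ^ ε := by
            rw [← Real.rpow_add hr]; congr 1; rw [hα1, ha]; ring
          have e2 : r ^ (Q - a) = r ^ (-(θ*p)) := by congr 1; rw [ha]; ring
          rw [Real.div_rpow (by norm_num : (0:ℝ) ≤ 2) hr.le, e1, e2, hKI]
          field_simp
  -- the two double-integral pieces
  set F1 : Z → Z → ℝ≥0∞ := fun x z => if dist x x₀ < 2*r then H (dist x z) else 0 with hF1
  set F2 : Z → Z → ℝ≥0∞ := fun x z => if dist z x₀ < 2*r then H (dist x z) else 0 with hF2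
  have hHm : Measurable H := by
    simp only [hH]
    exact ENNReal.measurable_ofReal.comp (measurable_const.mul (Measurable.ite
      (measurableSet_lt measurable_id measurable_const)
      (measurable_const.mul (measurable_rpow_const' (-α1)))
      (measurable_rpow_const' (-a))))
  have hF1m : Measurable (Function.uncurry F1) := by
    simp only [hF1, Function.uncurry]
    exact Measurable.ite
      (((continuous_fst.dist continuous_const).measurable) measurableSet_Iio)
      (hHm.comp (continuous_dist.measurable)) measurable_const
  have hF2m : Measurable (Function.uncurry F2) := by
    simp only [hF2, Function.uncurry]
    exact Measurable.ite
      (((continuous_snd.dist continuous_const).measurable) measurableSet_Iio)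
      (hHm.comp (continuous_dist.measurable)) measurable_const
  have hpt : ∀ x z : Z,
      ENNReal.ofReal (|u x - u z| ^ p / dist x z ^ (θ * p)) / ν (ball x (dist x z)) ≤
        F1 x z + F2 x z := by
    intro x z
    by_cases hx : dist x x₀ < 2*r
    · refine le_trans (hcore x z) ?_
      refine le_trans (le_of_eq ?_) le_self_add
      simp only [hF1]
      rw [if_pos hx]
    · by_cases hz : dist z x₀ < 2*r
      · refine le_trans (hcore x z) ?_
        refine le_trans (le_of_eq ?_) le_add_self
        simp only [hF2]
        rw [if_pos hz]
      · have hux : u x = 0 := huzero x (not_lt.1 hx)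
        have huz : u z = 0 := huzero z (not_lt.1 hz)
        rw [hux, huz, sub_self, abs_zero, Real.zero_rpow hp0.ne', zero_div,
          ENNReal.ofReal_zero, ENNReal.zero_div]
        exact zero_le
  -- bounding the two pieces
  have hb1 : ∫⁻ x, ∫⁻ z, F1 x z ∂ν ∂ν ≤
      ENNReal.ofReal (KI * r ^ (-(θ * p))) * ENNReal.ofReal (CA * (2*r) ^ Q) := by
    have step : ∀ x : Z, ∫⁻ z, F1 x z ∂ν ≤
        (ball x₀ (2*r)).indicator (fun _ => ENNReal.ofReal (KI * r ^ (-(θ * p)))) x := by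
      intro x
      by_cases hx : dist x x₀ < 2*r
      · rw [Set.indicator_of_mem (mem_ball.2 hx)]
        refine le_trans (le_of_eq ?_) (hinner x)
        apply lintegral_congr
        intro z
        simp only [hF1]
        rw [if_pos hx]
      · rw [Set.indicator_of_notMem (by simpa [mem_ball] using hx)]
        apply le_of_eq
        have hz0 : ∀ z, F1 x z = 0 := fun z => by simp only [hF1]; rw [if_neg hx]
        simp [hz0]
    calc ∫⁻ x, ∫⁻ z, F1 x z ∂ν ∂ν
        ≤ ∫⁻ x, (ball x₀ (2*r)).indicator
            (fun _ => ENNReal.ofReal (KI * r ^ (-(θ*p)))) x ∂ν := lintegral_mono step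
      _ = ENNReal.ofReal (KI * r ^ (-(θ*p))) * ν (ball x₀ (2*r)) := by
          rw [lintegral_indicator measurableSet_ball, setLIntegral_const]
      _ ≤ _ := mul_le_mul_right (hA x₀ (2*r) (by linarith)) _
  have hb2 : ∫⁻ x, ∫⁻ z, F2 x z ∂ν ∂ν ≤
      ENNReal.ofReal (KI * r ^ (-(θ * p))) * ENNReal.ofReal (CA * (2*r) ^ Q) := by
    rw [lintegral_lintegral_swap hF2m.aemeasurable]
    have step : ∀ z : Z, ∫⁻ x, F2 x z ∂ν ≤
        (ball x₀ (2*r)).indicator (fun _ => ENNReal.ofReal (KI * r ^ (-(θ * p)))) z := by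
      intro z
      by_cases hz : dist z x₀ < 2*r
      · rw [Set.indicator_of_mem (mem_ball.2 hz)]
        calc ∫⁻ x, F2 x z ∂ν = ∫⁻ x, H (dist x z) ∂ν := by
              apply lintegral_congr; intro x; simp only [hF2]; rw [if_pos hz]
          _ = ∫⁻ x, H (dist z x) ∂ν := by
              apply lintegral_congr; intro x; rw [dist_comm]
          _ ≤ _ := hinner z
      · rw [Set.indicator_of_notMem (by simpa [mem_ball] using hz)]
        apply le_of_eq
        have hz0 : ∀ x, F2 x z = 0 := fun x => by simp only [hF2]; rw [if_neg hz]
        simp [hz0]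
    calc ∫⁻ z, ∫⁻ x, F2 x z ∂ν ∂ν
        ≤ ∫⁻ z, (ball x₀ (2*r)).indicator
            (fun _ => ENNReal.ofReal (KI * r ^ (-(θ*p)))) z ∂ν := lintegral_mono step
      _ = ENNReal.ofReal (KI * r ^ (-(θ*p))) * ν (ball x₀ (2*r)) := by
          rw [lintegral_indicator measurableSet_ball, setLIntegral_const]
      _ ≤ _ := mul_le_mul_right (hA x₀ (2*r) (by linarith)) _
  -- total energy bound
  have hE : besovEnergy ν θ p u ≤ ENNReal.ofReal (C * r ^ (Q - θ * p)) := by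
    calc besovEnergy ν θ p u
        ≤ ∫⁻ x, ∫⁻ z, (F1 x z + F2 x z) ∂ν ∂ν :=
          lintegral_mono fun x => lintegral_mono fun z => hpt x z
      _ = (∫⁻ x, ∫⁻ z, F1 x z ∂ν ∂ν) + ∫⁻ x, ∫⁻ z, F2 x z ∂ν ∂ν := by
          have inner : ∀ x, ∫⁻ z, (F1 x z + F2 x z) ∂ν =
              (∫⁻ z, F1 x z ∂ν) + ∫⁻ z, F2 x z ∂ν := by
            intro x
            refine lintegral_add_left ?_ _
            simp only [hF1]
            exact Measurable.ite (MeasurableSet.const _)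
              (hHm.comp ((continuous_const.dist continuous_id).measurable)) measurable_const
          simp_rw [inner]
          exact lintegral_add_left hF1m.lintegral_prod_right _
      _ ≤ ENNReal.ofReal (KI * r ^ (-(θ * p))) * ENNReal.ofReal (CA * (2*r) ^ Q) +
          ENNReal.ofReal (KI * r ^ (-(θ * p))) * ENNReal.ofReal (CA * (2*r) ^ Q) :=
          add_le_add hb1 hb2
      _ ≤ _ := by
          have h2r : (2*r) ^ Q = 2 ^ Q * r ^ Q := Real.mul_rpow (by norm_num) hr.le
          have e3 : r ^ (-(θ*p)) * r ^ Q = r ^ (Q - θ*p) := by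
            rw [← Real.rpow_add hr]; congr 1; ring
          rw [← ENNReal.ofReal_mul (by positivity),
            ← ENNReal.ofReal_add (by positivity) (by positivity)]
          apply ENNReal.ofReal_le_ofReal
          apply le_of_eq
          rw [h2r, hC, ← e3]
          ring
  -- membership and admissibility
  have hucont : Continuous u := by
    simp only [hu]
    exact continuous_const.min (continuous_const.max
      ((continuous_const.sub (continuous_id.dist continuous_const)).mul continuous_const))
  have hmem : MemBesov ν θ p u := by
    constructor
    · refine MemLp.of_bound hucont.aestronglyMeasurable 1 ?_
      refine Filter.Eventually.of_forall fun x => ?_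
      rw [Real.norm_eq_abs, abs_le]
      exact ⟨by linarith [hu0 x], hu1 x⟩
    · exact lt_of_le_of_lt hE ENNReal.ofReal_lt_top
  have hadm1 : ∃ U, IsOpen U ∧ closedBall x₀ r ⊆ U ∧ ∀ x ∈ U, 1 ≤ u x := by
    refine ⟨ball x₀ (3/2 * r), isOpen_ball, ?_, ?_⟩
    · intro y hy
      rw [mem_closedBall] at hy
      exact mem_ball.2 (by linarith)
    · intro y hy
      rw [mem_ball] at hy
      have heq : (2*r - dist y x₀) * (2/r) - 1 = (3*r - 2*dist y x₀)/r := by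
        field_simp
        ring
      have hpos2 : 0 < (3*r - 2*dist y x₀)/r := div_pos (by linarith) hr
      have h1 : (1:ℝ) ≤ (2*r - dist y x₀) * (2/r) := by linarith
      simp only [hu]
      exact le_min le_rfl (le_max_of_le_right h1)
  have hadm2 : ∃ V, IsOpen V ∧ (univ \ ball x₀ R) ⊆ V ∧ ∀ x ∈ V, u x ≤ 0 := by
    refine ⟨(closedBall x₀ (2*r))ᶜ, Metric.isClosed_closedBall.isOpen_compl, ?_, ?_⟩
    · intro y hy
      simp only [mem_compl_iff, mem_closedBall]
      intro hc
      exact hy.2 (mem_ball.2 (by linarith))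
    · intro y hy
      simp only [mem_compl_iff, mem_closedBall, not_le] at hy
      exact le_of_eq (huzero y hy.le)
  calc besovCapacity ν θ p (closedBall x₀ r) (univ \ ball x₀ R) ≤ besovEnergy ν θ p u := by
        refine iInf_le_of_le u ?_
        refine iInf_le_of_le hmem ?_
        refine iInf_le_of_le hadm1 ?_
        exact iInf_le _ hadm2
    _ ≤ _ := hE
end

section
/- Let (Z,d,ν) be a compact metric measure space, 0 < diam(Z) < 1, with ν Ahlfors Q-regular for some Q > 0, and let 1 < p < ∞ and 0 < θ < 1 with pθ < Q and R ≤ 1. Then there is a constant C > 0 (depending only on p, θ, Q and the Ahlfors regularity constant of ν) such that for every x₀ ∈ Z and all 0 < r < R/2, the relative Besov capacity satisfies cp_{B^θ_{p,p}(Z)}(B̄(x₀,r), Z \ B(x₀,R)) ≤ C · (log(R/r))^{−p}; in particular, this capacity tends to zero as R/r → ∞ with R fixed. -/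
open MeasureTheory Metric Set
open scoped ENNReal

lemma pow_interp {t s c p : ℝ} (ht0 : 0 ≤ t) (ht1 : t ≤ 1) (hts : t ≤ s)
    (hc0 : 0 ≤ c) (hcp : c ≤ p) (hp : 0 < p) : t ^ p ≤ s ^ c := by
  rcases eq_or_lt_of_le ht0 with h | h
  · rw [← h, Real.zero_rpow hp.ne']
    exact Real.rpow_nonneg (le_trans ht0 hts) c
  · calc t ^ p ≤ t ^ c := Real.rpow_le_rpow_of_exponent_ge h ht1 hcp
      _ ≤ s ^ c := Real.rpow_le_rpow ht0 hts hc0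

lemma riesz_bound {Z : Type*} [MetricSpace Z] [MeasurableSpace Z] [BorelSpace Z]
    (ν : Measure Z) (CA Q a : ℝ) (hCA : 0 < CA) (ha0 : 0 < a) (haQ : a < Q)
    (hdist : ∀ x z : Z, dist x z < 1)
    (hup : ∀ (x : Z) (t : ℝ), 0 < t → ν (ball x t) ≤ ENNReal.ofReal (CA * t ^ Q))
    (x : Z) :
    ∫⁻ z, ENNReal.ofReal (dist x z ^ (-a)) ∂ν ≤
      ENNReal.ofReal (CA * 2 ^ a * (1 - (2:ℝ)⁻¹ ^ (Q - a))⁻¹) := by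
  set y : ℝ := (2:ℝ)⁻¹ with hy
  have hy0 : (0:ℝ) < y := by norm_num [hy]
  have hy1 : y < 1 := by norm_num [hy]
  set q : ℝ := y ^ (Q - a) with hq
  have hq0 : 0 ≤ q := Real.rpow_nonneg hy0.le _
  have hq1 : q < 1 := Real.rpow_lt_one hy0.le hy1 (by linarith)
  set A : ℕ → Set Z := fun j => {z | y ^ (j+1) ≤ dist x z ∧ dist x z < y ^ j} with hA
  have hAmeas : ∀ j, MeasurableSet (A j) := by
    intro j
    have : A j = (fun z => dist x z) ⁻¹' (Ico (y ^ (j+1)) (y ^ j)) := rfl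
    rw [this]
    exact (Continuous.dist continuous_const continuous_id).measurable measurableSet_Ico
  have hptwise : ∀ z, ENNReal.ofReal (dist x z ^ (-a)) ≤
      ∑' j, (A j).indicator (fun _ => ENNReal.ofReal ((y ^ (j+1) : ℝ) ^ (-a))) z := by
    intro z
    by_cases hz : dist x z = 0
    · rw [hz, Real.zero_rpow (by linarith : -a ≠ 0)]
      simp
    · have hd0 : 0 < dist x z := lt_of_le_of_ne dist_nonneg (Ne.symm hz)
      have hP : ∃ n, y ^ (n+1) ≤ dist x z := by
        obtain ⟨n, hn⟩ := exists_pow_lt_of_lt_one hd0 hy1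
        exact ⟨n, le_trans (pow_le_pow_of_le_one hy0.le hy1.le (Nat.le_succ n)) hn.le⟩
      classical
      set m := Nat.find hP with hm
      have h1 : y ^ (m+1) ≤ dist x z := Nat.find_spec hP
      have h2 : dist x z < y ^ m := by
        rcases Nat.eq_zero_or_pos m with h | h
        · rw [h, pow_zero]; exact hdist x z
        · have := Nat.find_min hP (m := m - 1) (by omega)
          push_neg at this
          have hms : m - 1 + 1 = m := by omega
          rwa [hms] at this
      have hzA : z ∈ A m := ⟨h1, h2⟩
      calc ENNReal.ofReal (dist x z ^ (-a))
          ≤ (A m).indicator (fun _ => ENNReal.ofReal ((y ^ (m+1) : ℝ) ^ (-a))) z := by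
            rw [Set.indicator_of_mem hzA]
            exact ENNReal.ofReal_le_ofReal
              (Real.rpow_le_rpow_of_nonpos (by positivity) h1 (by linarith))
        _ ≤ _ := ENNReal.le_tsum m
  calc ∫⁻ z, ENNReal.ofReal (dist x z ^ (-a)) ∂ν
      ≤ ∫⁻ z, ∑' j, (A j).indicator (fun _ => ENNReal.ofReal ((y ^ (j+1) : ℝ) ^ (-a))) z ∂ν :=
        lintegral_mono hptwise
    _ = ∑' j, ∫⁻ z, (A j).indicator (fun _ => ENNReal.ofReal ((y ^ (j+1) : ℝ) ^ (-a))) z ∂ν :=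
        lintegral_tsum (fun j => ((measurable_const.indicator (hAmeas j)).aemeasurable))
    _ = ∑' j, ENNReal.ofReal ((y ^ (j+1) : ℝ) ^ (-a)) * ν (A j) := by
        simp_rw [lintegral_indicator_const (hAmeas _)]
    _ ≤ ∑' j, ENNReal.ofReal (CA * 2 ^ a * q ^ j) := by
        refine ENNReal.tsum_le_tsum fun j => ?_
        have hAb : ν (A j) ≤ ENNReal.ofReal (CA * (y ^ j : ℝ) ^ Q) := by
          refine le_trans (measure_mono ?_) (hup x (y ^ j) (by positivity))
          intro z hz; exact mem_ball'.mpr hz.2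
        calc ENNReal.ofReal ((y ^ (j+1) : ℝ) ^ (-a)) * ν (A j)
            ≤ ENNReal.ofReal ((y ^ (j+1) : ℝ) ^ (-a)) * ENNReal.ofReal (CA * (y ^ j : ℝ) ^ Q) :=
              mul_le_mul_right hAb _
          _ = ENNReal.ofReal ((y ^ (j+1) : ℝ) ^ (-a) * (CA * (y ^ j : ℝ) ^ Q)) :=
              (ENNReal.ofReal_mul (by positivity)).symm
          _ = ENNReal.ofReal (CA * 2 ^ a * q ^ j) := by
              congr 1
              have e1 : (y ^ (j+1) : ℝ) ^ (-a) = y ^ (((j:ℝ)+1) * (-a)) := by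
                rw [← Real.rpow_natCast y (j+1), ← Real.rpow_mul hy0.le]
                push_cast; ring_nf
              have e2 : ((y ^ j : ℝ)) ^ Q = y ^ ((j:ℝ) * Q) := by
                rw [← Real.rpow_natCast y j, ← Real.rpow_mul hy0.le]
              have e3 : (q : ℝ) ^ j = y ^ ((j:ℝ) * (Q - a)) := by
                rw [hq, ← Real.rpow_natCast (y ^ (Q-a)) j, ← Real.rpow_mul hy0.le]
                ring_nf
              have e4 : y ^ (-a : ℝ) = 2 ^ a := by
                rw [hy, ← Real.rpow_neg_one (2:ℝ)]
                rw [← Real.rpow_mul (by norm_num)]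
                ring_nf
              rw [e1, e2, e3]
              rw [show ((j:ℝ)+1) * (-a) = (-a) + (j:ℝ)*(-a) by ring]
              rw [Real.rpow_add hy0, e4]
              rw [show (j:ℝ) * (Q - a) = (j:ℝ)*Q + (j:ℝ)*(-a) by ring, Real.rpow_add hy0]
              ring
    _ = ENNReal.ofReal (∑' j, CA * 2 ^ a * q ^ j) := by
        rw [ENNReal.ofReal_tsum_of_nonneg (fun j => by positivity)
          ((summable_geometric_of_lt_one hq0 hq1).mul_left _)]
    _ = ENNReal.ofReal (CA * 2 ^ a * (1 - q)⁻¹) := by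
        rw [tsum_mul_left, tsum_geometric_of_lt_one hq0 hq1]

set_option maxHeartbeats 2000000 in
theorem besov_capacity_annulus_upper_subcritical_log
    {Z : Type*} [MetricSpace Z] [CompactSpace Z] [MeasurableSpace Z] [BorelSpace Z]
    (ν : Measure Z) (Q CA p θ : ℝ)
    (hdiam0 : 0 < Metric.diam (Set.univ : Set Z))
    (hdiam1 : Metric.diam (Set.univ : Set Z) < 1)
    (hQ : 0 < Q) (hreg : IsAhlforsRegular ν Q CA)
    (hp : 1 < p) (hθ0 : 0 < θ) (hθ1 : θ < 1) (hpθ : p * θ < Q) :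
    ∃ C > 0, ∀ (x₀ : Z) (r R : ℝ), 0 < r → r < R / 2 → R ≤ 1 →
      besovCapacity ν θ p (closedBall x₀ r) (univ \ ball x₀ R) ≤
        ENNReal.ofReal (C * Real.log (R / r) ^ (-p)) := by
  obtain ⟨hCA1, hAhl⟩ := hreg
  have hCA : (0:ℝ) < CA := lt_of_lt_of_le one_pos hCA1
  have hp0 : (0:ℝ) < p := by linarith
  -- distances are < 1
  have hdZ : ∀ x z : Z, dist x z < 1 := fun x z =>
    lt_of_le_of_lt (dist_le_diam_of_mem isCompact_univ.isBounded trivial trivial) hdiam1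
  -- uniform upper mass bound
  have hup : ∀ (x : Z) (t : ℝ), 0 < t → ν (ball x t) ≤ ENNReal.ofReal (CA * t ^ Q) := by
    intro x t ht
    by_cases h2 : t < 2 * Metric.diam (Set.univ : Set Z)
    · exact (hAhl x t ht h2).2
    · push_neg at h2
      have hd32 : (0:ℝ) < 3/2 * Metric.diam (Set.univ : Set Z) := by linarith
      have hsub : ball x t ⊆ ball x (3/2 * Metric.diam (Set.univ : Set Z)) := by
        intro z _
        exact mem_ball.mpr (lt_of_le_of_lt
          (dist_le_diam_of_mem isCompact_univ.isBounded trivial trivial) (by linarith))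
      calc ν (ball x t) ≤ ν (ball x (3/2 * Metric.diam (Set.univ : Set Z))) := measure_mono hsub
        _ ≤ ENNReal.ofReal (CA * (3/2 * Metric.diam (Set.univ : Set Z)) ^ Q) :=
            (hAhl x _ hd32 (by linarith)).2
        _ ≤ ENNReal.ofReal (CA * t ^ Q) := by
            refine ENNReal.ofReal_le_ofReal ?_
            have : (3/2 * Metric.diam (Set.univ : Set Z)) ^ Q ≤ t ^ Q :=
              Real.rpow_le_rpow hd32.le (by linarith) hQ.le
            nlinarith
  -- Z is nonempty and ν is finite
  have hZne : Nonempty Z := by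
    by_contra h
    rw [not_nonempty_iff] at h
    rw [Set.univ_eq_empty_iff.mpr h] at hdiam0
    simp [Metric.diam_empty] at hdiam0
  obtain ⟨x₁⟩ := hZne
  have hνfin : IsFiniteMeasure ν := by
    constructor
    calc ν univ ≤ ν (ball x₁ 1) := measure_mono (fun z _ => mem_ball.mpr (hdZ z x₁))
      _ ≤ ENNReal.ofReal (CA * 1 ^ Q) := hup x₁ 1 one_pos
      _ < ⊤ := ENNReal.ofReal_lt_top
  -- constants
  set ε : ℝ := min ((Q - p*θ)/(2*p)) ((1-θ)/2) with hεdef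
  have hε0 : 0 < ε := lt_min (div_pos (by linarith) (by linarith)) (by linarith)
  have hεp : ε * p ≤ (Q - p*θ)/2 := by
    have h1 : ε ≤ (Q - p*θ)/(2*p) := min_le_left _ _
    calc ε * p ≤ (Q - p*θ)/(2*p) * p := by nlinarith
      _ = (Q - p*θ)/2 := by field_simp
  set θ' : ℝ := θ + ε with hθ'def
  have hθ'0 : 0 < θ' := by positivity
  have hθ'1 : θ' ≤ 1 := by
    have := min_le_right ((Q - p*θ)/(2*p)) ((1-θ)/2)
    simp only [hθ'def]; linarith [this]
  have hθ'Q : θ' * p < Q := by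
    have : θ' * p = θ * p + ε * p := by ring
    nlinarith
  set a : ℝ := Q - ε * p with hadef
  have ha0 : 0 < a := by nlinarith
  have haQ : a < Q := by nlinarith
  set b : ℝ := Q - θ' * p with hbdef
  have hb0 : 0 < b := by linarith
  set Kr : ℝ := CA * 2 ^ a * (1 - (2:ℝ)⁻¹ ^ (Q - a))⁻¹ with hKrdef
  have hKr0 : 0 < Kr := by
    have hq1 : (2:ℝ)⁻¹ ^ (Q - a) < 1 :=
      Real.rpow_lt_one (by norm_num) (by norm_num) (by linarith)
    have h2a : (0:ℝ) < (2:ℝ) ^ a := Real.rpow_pos_of_pos two_pos a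
    have : (0:ℝ) < (1 - (2:ℝ)⁻¹ ^ (Q - a)) := by linarith
    positivity
  set c1 : ℝ := CA * 2 ^ (θ' * p) with hc1def
  have hc10 : 0 < c1 := by
    have := Real.rpow_pos_of_pos two_pos (θ' * p); positivity
  set C2 : ℝ := 2 * (CA * 2 ^ Q) * c1 * Kr with hC2def
  have hC20 : 0 < C2 := by
    have := Real.rpow_pos_of_pos two_pos Q; positivity
  have hfac0 : (0:ℝ) < (2*p/b) ^ p := Real.rpow_pos_of_pos (by positivity) p
  refine ⟨C2 * (2*p/b) ^ p, by positivity, ?_⟩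
  intro x₀ r R hr hrR hR
  have h2rR : 2 * r < R := by linarith
  have hR0 : 0 < R := by linarith
  -- the test function
  set u : Z → ℝ := fun z => max 0 (min 1 ((2*r - dist z x₀) * (2/r))) with hudef
  have hu0 : ∀ z, 0 ≤ u z := fun z => le_max_left _ _
  have hu1 : ∀ z, u z ≤ 1 := fun z => max_le (by norm_num) (min_le_left _ _)
  have huzero : ∀ z, 2*r ≤ dist z x₀ → u z = 0 := by
    intro z hz
    have : (2*r - dist z x₀) * (2/r) ≤ 0 :=
      mul_nonpos_of_nonpos_of_nonneg (by linarith) (by positivity)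
    exact max_eq_left (le_trans (min_le_right _ _) this)
  have huone : ∀ z, dist z x₀ < 3*r/2 → 1 ≤ u z := by
    intro z hz
    have h1 : (1:ℝ) ≤ (2*r - dist z x₀) * (2/r) := by
      rw [← sub_nonneg]
      have : (2*r - dist z x₀) * (2/r) - 1 = ((2*r - dist z x₀)*2 - r) / r := by
        field_simp
      rw [this]
      apply div_nonneg _ hr.le
      linarith
    exact le_trans (le_min le_rfl h1) (le_max_right _ _)
  have huLip : ∀ x z : Z, |u x - u z| ≤ dist x z * (2/r) := by
    intro x z
    have h1 : |u x - u z| ≤ |min 1 ((2*r - dist x x₀) * (2/r)) - min 1 ((2*r - dist z x₀) * (2/r))| := by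
      have := abs_max_sub_max_le_max (0:ℝ) (min 1 ((2*r - dist x x₀) * (2/r)))
        0 (min 1 ((2*r - dist z x₀) * (2/r)))
      simpa using this
    have h2 : |min 1 ((2*r - dist x x₀) * (2/r)) - min 1 ((2*r - dist z x₀) * (2/r))| ≤
        |(2*r - dist x x₀) * (2/r) - (2*r - dist z x₀) * (2/r)| := by
      have := abs_min_sub_min_le_max (1:ℝ) ((2*r - dist x x₀) * (2/r))
        1 ((2*r - dist z x₀) * (2/r))
      simpa using this
    have h3 : |(2*r - dist x x₀) * (2/r) - (2*r - dist z x₀) * (2/r)| =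
        |dist x x₀ - dist z x₀| * (2/r) := by
      rw [show (2*r - dist x x₀) * (2/r) - (2*r - dist z x₀) * (2/r)
          = (dist z x₀ - dist x x₀) * (2/r) by ring]
      rw [abs_mul, abs_of_nonneg (by positivity : (0:ℝ) ≤ 2/r), abs_sub_comm]
    have h4 : |dist x x₀ - dist z x₀| ≤ dist x z := abs_dist_sub_le x z x₀
    calc |u x - u z| ≤ |dist x x₀ - dist z x₀| * (2/r) := by rw [← h3]; exact le_trans h1 h2
      _ ≤ dist x z * (2/r) := by
          have : (0:ℝ) < 2/r := by positivity
          nlinarith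
  have hucont : Continuous u := by
    apply continuous_const.max
    apply continuous_const.min
    exact ((continuous_const.sub (continuous_id.dist continuous_const)).mul continuous_const)
  -- measurability of the Riesz kernel
  have hrpm : Measurable fun t : ℝ => t ^ (-a) := by fun_prop
  have hgm : ∀ x : Z, Measurable (fun z : Z => ENNReal.ofReal (dist x z ^ (-a))) := by
    intro x
    exact ENNReal.measurable_ofReal.comp
      (hrpm.comp (continuous_const.dist continuous_id).measurable)
  have hgm2 : ∀ z : Z, Measurable (fun x : Z => ENNReal.ofReal (dist x z ^ (-a))) := by
    intro z
    exact ENNReal.measurable_ofReal.comp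
      (hrpm.comp (continuous_id.dist continuous_const).measurable)
  set B : Set Z := ball x₀ (2*r) with hBdef
  set M : ℝ≥0∞ := ENNReal.ofReal (c1 * r ^ (-(θ'*p))) with hMdef
  set K : ℝ≥0∞ := ENNReal.ofReal Kr with hKdef
  have hKbound : ∀ x : Z, ∫⁻ z, ENNReal.ofReal (dist x z ^ (-a)) ∂ν ≤ K :=
    riesz_bound ν CA Q a hCA ha0 haQ hdZ hup
  -- pointwise estimate on the Besov integrand
  have key : ∀ x z : Z,
      ENNReal.ofReal (|u x - u z| ^ p / dist x z ^ (θ * p)) / ν (ball x (dist x z)) ≤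
      (B.indicator (fun _ => (1:ℝ≥0∞)) x + B.indicator (fun _ => (1:ℝ≥0∞)) z) *
        (M * ENNReal.ofReal (dist x z ^ (-a))) := by
    intro x z
    by_cases hout : 2*r ≤ dist x x₀ ∧ 2*r ≤ dist z x₀
    · rw [huzero x hout.1, huzero z hout.2]
      simp only [sub_self, abs_zero]
      rw [Real.zero_rpow hp0.ne', zero_div, ENNReal.ofReal_zero, ENNReal.zero_div]
      exact zero_le
    · have hind : (1:ℝ≥0∞) ≤
          B.indicator (fun _ => (1:ℝ≥0∞)) x + B.indicator (fun _ => (1:ℝ≥0∞)) z := by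
        rcases not_and_or.mp hout with hx | hz
        · rw [Set.indicator_of_mem (mem_ball.mpr (not_le.mp hx))]
          exact le_add_right le_rfl
        · rw [Set.indicator_of_mem (mem_ball.mpr (not_le.mp hz))]
          exact le_add_left le_rfl
      have hmain : ENNReal.ofReal (|u x - u z| ^ p / dist x z ^ (θ * p)) / ν (ball x (dist x z))
          ≤ M * ENNReal.ofReal (dist x z ^ (-a)) := by
        by_cases hdxz : dist x z = 0
        · have hxz : x = z := by rwa [dist_eq_zero] at hdxz
          rw [hxz]
          simp only [sub_self, abs_zero]
          rw [Real.zero_rpow hp0.ne', zero_div, ENNReal.ofReal_zero, ENNReal.zero_div]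
          exact zero_le
        · have hd0 : 0 < dist x z := lt_of_le_of_ne dist_nonneg (Ne.symm hdxz)
          have hdd : dist x z ≤ Metric.diam (Set.univ : Set Z) :=
            dist_le_diam_of_mem isCompact_univ.isBounded trivial trivial
          have hlow : ENNReal.ofReal (dist x z ^ Q / CA) ≤ ν (ball x (dist x z)) :=
            (hAhl x (dist x z) hd0 (by linarith)).1
          have habs1 : |u x - u z| ≤ 1 :=
            abs_sub_le_iff.mpr ⟨by linarith [hu1 x, hu0 z], by linarith [hu1 z, hu0 x]⟩
          have habs : |u x - u z| ^ p ≤ (dist x z * (2/r)) ^ (θ'*p) :=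
            pow_interp (abs_nonneg _) habs1 (huLip x z) (by positivity)
              (by nlinarith) hp0
          have hdθp : (0:ℝ) < dist x z ^ (θ*p) := Real.rpow_pos_of_pos hd0 _
          have hdQ : (0:ℝ) < dist x z ^ Q := Real.rpow_pos_of_pos hd0 _
          have hreal : |u x - u z| ^ p / dist x z ^ (θ*p) / (dist x z ^ Q / CA) ≤
              c1 * r ^ (-(θ'*p)) * dist x z ^ (-a) := by
            have hstep : |u x - u z| ^ p / dist x z ^ (θ*p) / (dist x z ^ Q / CA) ≤
                (dist x z * (2/r)) ^ (θ'*p) / dist x z ^ (θ*p) / (dist x z ^ Q / CA) := by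
              gcongr
            refine le_trans hstep (le_of_eq ?_)
            have hexp : (dist x z * (2/r)) ^ (θ'*p) =
                dist x z ^ (θ'*p) * (2 ^ (θ'*p) * r ^ (-(θ'*p))) := by
              rw [Real.mul_rpow hd0.le (by positivity),
                Real.div_rpow (by norm_num) hr.le, Real.rpow_neg hr.le, div_eq_mul_inv]
            have hdpow : dist x z ^ (θ'*p) / dist x z ^ (θ*p) / dist x z ^ Q
                = dist x z ^ (-a) := by
              rw [← Real.rpow_sub hd0, ← Real.rpow_sub hd0]
              congr 1
              rw [hadef, hθ'def]; ring
            have hrp : (0:ℝ) < r ^ (-(θ'*p)) := Real.rpow_pos_of_pos hr _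
            have h2p : (0:ℝ) < (2:ℝ) ^ (θ'*p) := Real.rpow_pos_of_pos two_pos _
            rw [hexp, hc1def, ← hdpow]
            field_simp
          calc ENNReal.ofReal (|u x - u z| ^ p / dist x z ^ (θ * p)) / ν (ball x (dist x z))
              ≤ ENNReal.ofReal (|u x - u z| ^ p / dist x z ^ (θ * p)) /
                  ENNReal.ofReal (dist x z ^ Q / CA) := ENNReal.div_le_div_left hlow _
            _ = ENNReal.ofReal (|u x - u z| ^ p / dist x z ^ (θ * p) / (dist x z ^ Q / CA)) :=
                (ENNReal.ofReal_div_of_pos (by positivity)).symm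
            _ ≤ ENNReal.ofReal (c1 * r ^ (-(θ'*p)) * dist x z ^ (-a)) :=
                ENNReal.ofReal_le_ofReal hreal
            _ = M * ENNReal.ofReal (dist x z ^ (-a)) := by
                rw [hMdef, ← ENNReal.ofReal_mul (by positivity)]
      calc ENNReal.ofReal (|u x - u z| ^ p / dist x z ^ (θ * p)) / ν (ball x (dist x z))
          ≤ M * ENNReal.ofReal (dist x z ^ (-a)) := hmain
        _ = 1 * (M * ENNReal.ofReal (dist x z ^ (-a))) := (one_mul _).symm
        _ ≤ _ := mul_le_mul_left hind _
  -- the energy bound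
  have hnuB : ν B ≤ ENNReal.ofReal (CA * (2*r) ^ Q) := hup x₀ (2*r) (by positivity)
  have hterm1 : ∀ x : Z,
      ∫⁻ z, B.indicator (fun _ => (1:ℝ≥0∞)) x * (M * ENNReal.ofReal (dist x z ^ (-a))) ∂ν ≤
        B.indicator (fun _ => M * K) x := by
    intro x
    rw [lintegral_const_mul _ ((hgm x).const_mul M), lintegral_const_mul _ (hgm x)]
    by_cases hx : x ∈ B
    · rw [Set.indicator_of_mem hx, Set.indicator_of_mem hx, one_mul]
      exact mul_le_mul_right (hKbound x) M
    · rw [Set.indicator_of_notMem hx, Set.indicator_of_notMem hx, zero_mul]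
  have hterm2 : ∫⁻ x, ∫⁻ z,
      B.indicator (fun _ => (1:ℝ≥0∞)) z * (M * ENNReal.ofReal (dist x z ^ (-a))) ∂ν ∂ν ≤
      M * K * ν B := by
    have humeas : AEMeasurable (Function.uncurry fun x z : Z =>
        B.indicator (fun _ => (1:ℝ≥0∞)) z * (M * ENNReal.ofReal (dist x z ^ (-a))))
        (ν.prod ν) := by
      refine Measurable.aemeasurable ?_
      have h1 : Measurable fun q : Z × Z => B.indicator (fun _ => (1:ℝ≥0∞)) q.2 :=
        (measurable_const.indicator measurableSet_ball).comp measurable_snd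
      have h2 : Measurable fun q : Z × Z => ENNReal.ofReal (dist q.1 q.2 ^ (-a)) :=
        ENNReal.measurable_ofReal.comp (hrpm.comp measurable_dist)
      exact h1.mul (measurable_const.mul h2)
    rw [lintegral_lintegral_swap humeas]
    have hinner : ∀ z : Z,
        ∫⁻ x, B.indicator (fun _ => (1:ℝ≥0∞)) z * (M * ENNReal.ofReal (dist x z ^ (-a))) ∂ν ≤
          B.indicator (fun _ => M * K) z := by
      intro z
      rw [lintegral_const_mul _ ((hgm2 z).const_mul M), lintegral_const_mul _ (hgm2 z)]
      have hKz : ∫⁻ x, ENNReal.ofReal (dist x z ^ (-a)) ∂ν ≤ K := by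
        have := hKbound z
        simp_rw [dist_comm z _] at this
        exact this
      by_cases hz : z ∈ B
      · rw [Set.indicator_of_mem hz, Set.indicator_of_mem hz, one_mul]
        exact mul_le_mul_right hKz M
      · rw [Set.indicator_of_notMem hz, Set.indicator_of_notMem hz, zero_mul]
    calc ∫⁻ z, ∫⁻ x,
          B.indicator (fun _ => (1:ℝ≥0∞)) z * (M * ENNReal.ofReal (dist x z ^ (-a))) ∂ν ∂ν
        ≤ ∫⁻ z, B.indicator (fun _ => M * K) z ∂ν := lintegral_mono hinner
      _ = M * K * ν B := lintegral_indicator_const measurableSet_ball _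
  have hEbound : besovEnergy ν θ p u ≤ ENNReal.ofReal (C2 * r ^ b) := by
    have hsplit : besovEnergy ν θ p u ≤
        (∫⁻ x, B.indicator (fun _ => M * K) x ∂ν) +
        ∫⁻ x, ∫⁻ z,
          B.indicator (fun _ => (1:ℝ≥0∞)) z * (M * ENNReal.ofReal (dist x z ^ (-a))) ∂ν ∂ν := by
      have h1 : besovEnergy ν θ p u ≤ ∫⁻ x, ((∫⁻ z, B.indicator (fun _ => (1:ℝ≥0∞)) x *
            (M * ENNReal.ofReal (dist x z ^ (-a))) ∂ν) +
          ∫⁻ z, B.indicator (fun _ => (1:ℝ≥0∞)) z *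
            (M * ENNReal.ofReal (dist x z ^ (-a))) ∂ν) ∂ν := by
        refine le_trans (lintegral_mono fun x => lintegral_mono fun z => key x z) ?_
        refine le_of_eq (lintegral_congr fun x => ?_)
        rw [← lintegral_add_left (((hgm x).const_mul M).const_mul _)]
        congr 1 with z
        ring
      refine le_trans h1 ?_
      calc ∫⁻ x, ((∫⁻ z, B.indicator (fun _ => (1:ℝ≥0∞)) x *
            (M * ENNReal.ofReal (dist x z ^ (-a))) ∂ν) +
          ∫⁻ z, B.indicator (fun _ => (1:ℝ≥0∞)) z *
            (M * ENNReal.ofReal (dist x z ^ (-a))) ∂ν) ∂ν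
          ≤ ∫⁻ x, (B.indicator (fun _ => M * K) x +
            ∫⁻ z, B.indicator (fun _ => (1:ℝ≥0∞)) z *
              (M * ENNReal.ofReal (dist x z ^ (-a))) ∂ν) ∂ν :=
            lintegral_mono fun x => add_le_add_left (hterm1 x) _
        _ = (∫⁻ x, B.indicator (fun _ => M * K) x ∂ν) +
            ∫⁻ x, ∫⁻ z, B.indicator (fun _ => (1:ℝ≥0∞)) z *
              (M * ENNReal.ofReal (dist x z ^ (-a))) ∂ν ∂ν :=
            lintegral_add_left (measurable_const.indicator measurableSet_ball) _
    have hfin : (∫⁻ x, B.indicator (fun _ => M * K) x ∂ν) +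
        (∫⁻ x, ∫⁻ z, B.indicator (fun _ => (1:ℝ≥0∞)) z *
          (M * ENNReal.ofReal (dist x z ^ (-a))) ∂ν ∂ν) ≤ 2 * (M * K * ν B) := by
      rw [two_mul]
      refine add_le_add ?_ hterm2
      rw [lintegral_indicator_const measurableSet_ball]
    refine le_trans hsplit (le_trans hfin ?_)
    calc 2 * (M * K * ν B) ≤ 2 * (M * K * ENNReal.ofReal (CA * (2*r) ^ Q)) := by
          exact mul_le_mul_right (mul_le_mul_right hnuB _) 2
      _ = ENNReal.ofReal (2 * (c1 * r ^ (-(θ'*p)) * (Kr * (CA * (2*r) ^ Q)))) := by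
          rw [hMdef, hKdef, ← ENNReal.ofReal_mul (by positivity),
            ← ENNReal.ofReal_mul (by positivity)]
          rw [← ENNReal.ofReal_ofNat 2, ← ENNReal.ofReal_mul (by norm_num)]
          congr 1
          ring
      _ = ENNReal.ofReal (C2 * r ^ b) := by
          congr 1
          have h2rQ : ((2*r : ℝ)) ^ Q = 2 ^ Q * r ^ Q :=
            Real.mul_rpow (by norm_num) hr.le
          have hrb : r ^ (-(θ'*p)) * r ^ Q = r ^ b := by
            rw [← Real.rpow_add hr]; congr 1; rw [hbdef]; ring
          rw [h2rQ, hC2def]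
          calc 2 * (c1 * r ^ (-(θ'*p)) * (Kr * (CA * (2 ^ Q * r ^ Q))))
              = 2 * (CA * 2 ^ Q) * c1 * Kr * (r ^ (-(θ'*p)) * r ^ Q) := by ring
            _ = 2 * (CA * 2 ^ Q) * c1 * Kr * r ^ b := by rw [hrb]
  -- membership in the Besov class
  have hmem : MemBesov ν θ p u := by
    constructor
    · refine MemLp.mono_exponent (q := ⊤) ?_ le_top
      refine memLp_top_of_bound hucont.aestronglyMeasurable 1 (ae_of_all _ fun z => ?_)
      rw [Real.norm_eq_abs, abs_of_nonneg (hu0 z)]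
      exact hu1 z
    · exact lt_of_le_of_lt hEbound ENNReal.ofReal_lt_top
  -- capacity is at most the energy of u
  have hcap : besovCapacity ν θ p (closedBall x₀ r) (univ \ ball x₀ R) ≤
      besovEnergy ν θ p u := by
    refine iInf_le_of_le u (iInf_le_of_le hmem (iInf_le_of_le ?_ (iInf_le_of_le ?_ le_rfl)))
    · refine ⟨ball x₀ (3*r/2), isOpen_ball, closedBall_subset_ball (by linarith), ?_⟩
      intro x hx
      exact huone x (mem_ball.mp hx)
    · refine ⟨{z | 2*r < dist z x₀}, ?_, ?_, ?_⟩
      · exact isOpen_lt continuous_const (continuous_id.dist continuous_const)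
      · intro z hz
        have hnz : ¬ dist z x₀ < R := fun h => hz.2 (mem_ball.mpr h)
        exact lt_of_lt_of_le h2rR (not_lt.mp hnz)
      · intro z hz
        rw [huzero z (le_of_lt hz)]
  -- final logarithmic estimate
  refine le_trans hcap (le_trans hEbound (ENNReal.ofReal_le_ofReal ?_))
  have hRr2 : 2 < R / r := by rw [lt_div_iff₀ hr]; linarith
  have hL0 : 0 < Real.log (R / r) := Real.log_pos (by linarith)
  set L := Real.log (R / r) with hLdef
  set t := -Real.log r with htdef
  have hLt : L ≤ t := by
    rw [hLdef, htdef, Real.log_div hR0.ne' hr.ne']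
    have : Real.log R ≤ 0 := Real.log_nonpos hR0.le hR
    linarith
  have ht0 : 0 < t := lt_of_lt_of_le hL0 hLt
  have hrb : r ^ b = Real.exp (-(b * t)) := by
    rw [Real.rpow_def_of_pos hr, htdef]; ring_nf
  have hexp1 : t ≤ (2*p/b) * Real.exp (b * t / (2*p)) := by
    have h1 : b * t / (2*p) + 1 ≤ Real.exp (b * t / (2*p)) := Real.add_one_le_exp _
    have h3 : (0:ℝ) < 2*p/b := by positivity
    calc t = (2*p/b) * (b * t / (2*p)) := by field_simp
      _ ≤ (2*p/b) * Real.exp (b * t / (2*p)) := by nlinarith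
  have htp : t ^ p ≤ (2*p/b) ^ p * Real.exp (b * t / 2) := by
    have h1 : t ^ p ≤ ((2*p/b) * Real.exp (b * t / (2*p))) ^ p :=
      Real.rpow_le_rpow ht0.le hexp1 hp0.le
    have h2 : ((2*p/b) * Real.exp (b * t / (2*p))) ^ p
        = (2*p/b) ^ p * Real.exp (b * t / 2) := by
      rw [Real.mul_rpow (by positivity) (Real.exp_pos _).le, ← Real.exp_mul]
      congr 2
      field_simp
    rw [h2] at h1
    exact h1
  have hkey : r ^ b ≤ (2*p/b) ^ p * t ^ (-p) := by
    have htpp : (0:ℝ) < t ^ p := Real.rpow_pos_of_pos ht0 _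
    rw [Real.rpow_neg ht0.le, ← div_eq_mul_inv, le_div_iff₀ htpp, hrb]
    calc Real.exp (-(b * t)) * t ^ p
        ≤ Real.exp (-(b * t)) * ((2*p/b) ^ p * Real.exp (b * t / 2)) := by
          have := (Real.exp_pos (-(b*t))).le
          nlinarith [Real.exp_pos (-(b*t))]
      _ = (2*p/b) ^ p * Real.exp (-(b * t / 2)) := by
          rw [show Real.exp (-(b*t)) * ((2*p/b)^p * Real.exp (b*t/2))
              = (2*p/b)^p * (Real.exp (-(b*t)) * Real.exp (b*t/2)) from by ring,
            ← Real.exp_add]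
          congr 2
          ring
      _ ≤ (2*p/b) ^ p * 1 := by
          have : Real.exp (-(b * t / 2)) ≤ 1 := Real.exp_le_one_iff.mpr (by nlinarith)
          nlinarith [Real.rpow_pos_of_pos (show (0:ℝ) < 2*p/b by positivity) p]
      _ = (2*p/b) ^ p := mul_one _
  have hLp : t ^ (-p) ≤ L ^ (-p) :=
    Real.rpow_le_rpow_of_nonpos hL0 hLt (by linarith)
  calc C2 * r ^ b ≤ C2 * ((2*p/b) ^ p * t ^ (-p)) := mul_le_mul_of_nonneg_left hkey hC20.le
    _ ≤ C2 * ((2*p/b) ^ p * L ^ (-p)) :=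
      mul_le_mul_of_nonneg_left (mul_le_mul_of_nonneg_left hLp hfac0.le) hC20.le
    _ = C2 * (2*p/b) ^ p * L ^ (-p) := by ring
end

section
/- Let (Z,d,ν) be a compact metric measure space, 0 < diam(Z) < 1, with ν Ahlfors Q-regular for some Q > 0. Let 1 < p < ∞ and 0 < θ < 1 with pθ > Q. Then there exist constants c > 0 and C₀ > 2 (depending only on p, θ, Q and the Ahlfors regularity constant of ν) such that for every x₀ ∈ Z and all radii 0 < r < R < diam(Z)/(4C₀), the relative Besov capacity satisfies cp_{B^θ_{p,p}(Z)}(B̄(x₀,r), Z \ B(x₀,R)) ≥ c · R^{Q−θp}. -/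
open MeasureTheory Metric Set
open scoped ENNReal

/- ### Auxiliary lemmas -/

lemma besovEnergy_congr_ae {Z : Type*} [MetricSpace Z] [MeasurableSpace Z]
    (ν : Measure Z) (θ p : ℝ) {u g : Z → ℝ} (h : u =ᵐ[ν] g) :
    besovEnergy ν θ p u = besovEnergy ν θ p g := by
  unfold besovEnergy
  apply lintegral_congr_ae
  filter_upwards [h] with x hx
  apply lintegral_congr_ae
  filter_upwards [h] with z hz
  rw [hx, hz]

lemma pointwise_bound {Z : Type*} [MetricSpace Z] [MeasurableSpace Z]
    (ν : Measure Z) (θ p CA Q D : ℝ) (hp0 : 0 < p) (hθ0 : 0 < θ) (hQ : 0 < Q) (hCA : 1 ≤ CA)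
    (u : Z → ℝ) (x z : Z)
    (hup : x ≠ z → ν (ball x (dist x z)) ≤ ENNReal.ofReal (CA * dist x z ^ Q))
    (hd : dist x z ≤ D) :
    ENNReal.ofReal (|u x - u z| ^ p) ≤
      ENNReal.ofReal (CA * D ^ (θ * p + Q)) *
        (ENNReal.ofReal (|u x - u z| ^ p / dist x z ^ (θ * p)) / ν (ball x (dist x z))) := by
  rcases eq_or_ne x z with rfl | hne
  · simp [Real.zero_rpow (ne_of_gt hp0)]
  · set d := dist x z with hdd
    have hd0 : 0 < d := dist_pos.2 hne
    have hD0 : 0 < D := lt_of_lt_of_le hd0 hd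
    set A := |u x - u z| ^ p with hA
    have hA0 : 0 ≤ A := Real.rpow_nonneg (abs_nonneg _) p
    have hE0 : 0 ≤ θ * p + Q := by positivity
    have hstep1 : ENNReal.ofReal (CA * D ^ (θ * p + Q)) *
        (ENNReal.ofReal (A / d ^ (θ * p)) / ENNReal.ofReal (CA * d ^ Q)) ≤
        ENNReal.ofReal (CA * D ^ (θ * p + Q)) *
        (ENNReal.ofReal (A / d ^ (θ * p)) / ν (ball x d)) :=
      mul_le_mul_right (ENNReal.div_le_div_left (hup hne) _) _
    refine le_trans ?_ hstep1
    rw [← ENNReal.ofReal_div_of_pos (by positivity), ← ENNReal.ofReal_mul (by positivity)]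
    apply ENNReal.ofReal_le_ofReal
    have hdE : d ^ (θ * p) * d ^ Q = d ^ (θ * p + Q) := (Real.rpow_add hd0 _ _).symm
    have hkey : CA * D ^ (θ * p + Q) * (A / d ^ (θ * p) / (CA * d ^ Q))
        = A * (D / d) ^ (θ * p + Q) := by
      rw [Real.div_rpow (le_of_lt hD0) (le_of_lt hd0), ← hdE]
      have h1 : d ^ (θ * p) ≠ 0 := ne_of_gt (Real.rpow_pos_of_pos hd0 _)
      have h2 : d ^ Q ≠ 0 := ne_of_gt (Real.rpow_pos_of_pos hd0 _)
      have h3 : CA ≠ 0 := by linarith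
      field_simp
    rw [hkey]
    have h1le : (1 : ℝ) ≤ (D / d) ^ (θ * p + Q) :=
      Real.one_le_rpow ((one_le_div hd0).2 hd) hE0
    exact le_mul_of_one_le_right hA0 h1le

lemma double_bound {Z : Type*} [MetricSpace Z] [MeasurableSpace Z] [BorelSpace Z]
    (ν : Measure Z) (θ p CA Q D : ℝ) (hp0 : 0 < p) (hθ0 : 0 < θ) (hQ : 0 < Q) (hCA : 1 ≤ CA)
    (u : Z → ℝ)
    (hup : ∀ x z : Z, x ≠ z → ν (ball x (dist x z)) ≤ ENNReal.ofReal (CA * dist x z ^ Q))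
    (B₁ B₂ : Set Z) (hB₁ : MeasurableSet B₁) (hB₂ : MeasurableSet B₂)
    (hdist : ∀ x ∈ B₁, ∀ z ∈ B₂, dist x z ≤ D) :
    ∫⁻ x in B₁, ∫⁻ z in B₂, ENNReal.ofReal (|u x - u z| ^ p) ∂ν ∂ν ≤
      ENNReal.ofReal (CA * D ^ (θ * p + Q)) * besovEnergy ν θ p u := by
  have hK : (ENNReal.ofReal (CA * D ^ (θ * p + Q))) ≠ ⊤ := ENNReal.ofReal_ne_top
  have key : ∀ x ∈ B₁, ∫⁻ z in B₂, ENNReal.ofReal (|u x - u z| ^ p) ∂ν ≤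
      ENNReal.ofReal (CA * D ^ (θ * p + Q)) *
        ∫⁻ z, ENNReal.ofReal (|u x - u z| ^ p / dist x z ^ (θ * p)) / ν (ball x (dist x z)) ∂ν := by
    intro x hx
    calc ∫⁻ z in B₂, ENNReal.ofReal (|u x - u z| ^ p) ∂ν
        ≤ ∫⁻ z in B₂, ENNReal.ofReal (CA * D ^ (θ * p + Q)) *
            (ENNReal.ofReal (|u x - u z| ^ p / dist x z ^ (θ * p)) / ν (ball x (dist x z))) ∂ν := by
          refine lintegral_mono_ae ((ae_restrict_iff' hB₂).2 (ae_of_all _ ?_))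
          exact fun z hz => pointwise_bound ν θ p CA Q D hp0 hθ0 hQ hCA u x z (hup x z)
            (hdist x hx z hz)
      _ = ENNReal.ofReal (CA * D ^ (θ * p + Q)) *
            ∫⁻ z in B₂, ENNReal.ofReal (|u x - u z| ^ p / dist x z ^ (θ * p)) /
              ν (ball x (dist x z)) ∂ν :=
          lintegral_const_mul' _ _ hK
      _ ≤ _ := mul_le_mul_right (setLIntegral_le_lintegral _ _) _
  calc ∫⁻ x in B₁, ∫⁻ z in B₂, ENNReal.ofReal (|u x - u z| ^ p) ∂ν ∂ν
      ≤ ∫⁻ x in B₁, ENNReal.ofReal (CA * D ^ (θ * p + Q)) *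
          ∫⁻ z, ENNReal.ofReal (|u x - u z| ^ p / dist x z ^ (θ * p)) /
            ν (ball x (dist x z)) ∂ν ∂ν :=
        lintegral_mono_ae ((ae_restrict_iff' hB₁).2 (ae_of_all _ key))
    _ = ENNReal.ofReal (CA * D ^ (θ * p + Q)) *
          ∫⁻ x in B₁, ∫⁻ z, ENNReal.ofReal (|u x - u z| ^ p / dist x z ^ (θ * p)) /
            ν (ball x (dist x z)) ∂ν ∂ν :=
        lintegral_const_mul' _ _ hK
    _ ≤ _ := mul_le_mul_right (setLIntegral_le_lintegral _ _) _

lemma jensen_aux {Z : Type*} [MeasurableSpace Z] (ν : Measure Z) (s : Set Z)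
    {p q : ℝ} (hpq : p.HolderConjugate q) (f : Z → ℝ≥0∞) (hf : AEMeasurable f (ν.restrict s)) :
    ∫⁻ x in s, f x ∂ν ≤ (∫⁻ x in s, f x ^ p ∂ν) ^ (1 / p) * ν s ^ (1 / q) := by
  have h := ENNReal.lintegral_mul_le_Lp_mul_Lq (ν.restrict s) hpq hf
    (aemeasurable_const (b := (1 : ℝ≥0∞)))
  simpa [Measure.restrict_apply_univ] using h
lemma onestep {Z : Type*} [MetricSpace Z] [MeasurableSpace Z] [BorelSpace Z]
    (ν : Measure Z) [IsFiniteMeasure ν] (θ p CA Q D : ℝ)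
    (hp : 1 < p) (hθ0 : 0 < θ) (hQ : 0 < Q) (hCA : 1 ≤ CA)
    (u : Z → ℝ) (hu : Measurable u) (hui : Integrable u ν)
    (hup : ∀ x z : Z, x ≠ z → ν (ball x (dist x z)) ≤ ENNReal.ofReal (CA * dist x z ^ Q))
    (B₁ B₂ : Set Z) (hB₁ : MeasurableSet B₁) (hB₂ : MeasurableSet B₂)
    (m₁0 : ν B₁ ≠ 0) (m₂0 : ν B₂ ≠ 0)
    (hdist : ∀ x ∈ B₁, ∀ z ∈ B₂, dist x z ≤ D) :
    ENNReal.ofReal (|(ν B₁).toReal⁻¹ * ∫ x in B₁, u x ∂ν -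
        (ν B₂).toReal⁻¹ * ∫ z in B₂, u z ∂ν| ^ p) ≤
      ENNReal.ofReal (CA * D ^ (θ * p + Q)) * besovEnergy ν θ p u / (ν B₁ * ν B₂) := by
  have hp0 : 0 < p := lt_trans one_pos hp
  have hm₁t : ν B₁ ≠ ⊤ := measure_ne_top ν B₁
  have hm₂t : ν B₂ ≠ ⊤ := measure_ne_top ν B₂
  have hm₁ : 0 < (ν B₁).toReal := ENNReal.toReal_pos m₁0 hm₁t
  have hm₂ : 0 < (ν B₂).toReal := ENNReal.toReal_pos m₂0 hm₂t
  have hpq : p.HolderConjugate (Real.conjExponent p) := Real.HolderConjugate.conjExponent hp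
  set q := Real.conjExponent p with hqdef
  set L := ∫⁻ x in B₁, ∫⁻ z in B₂, ENNReal.ofReal |u x - u z| ∂ν ∂ν with hL
  set P := ∫⁻ x in B₁, ∫⁻ z in B₂, ENNReal.ofReal (|u x - u z| ^ p) ∂ν ∂ν with hP
  set m : ℝ≥0∞ := ν B₁ * ν B₂ with hm
  have hmne : m ≠ 0 := mul_ne_zero m₁0 m₂0
  have hmtop : m ≠ ⊤ := ENNReal.mul_ne_top hm₁t hm₂t
  -- Step 1
  have step1 : ENNReal.ofReal |(ν B₁).toReal⁻¹ * ∫ x in B₁, u x ∂ν -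
      (ν B₂).toReal⁻¹ * ∫ z in B₂, u z ∂ν| ≤ L / m := by
    have hinner : ∀ x : Z, ∫ z in B₂, (u x - u z) ∂ν
        = (ν B₂).toReal * u x - ∫ z in B₂, u z ∂ν := by
      intro x
      rw [integral_sub (integrable_const _) hui.integrableOn, setIntegral_const]
      simp [smul_eq_mul, Measure.real]
    have houter : ∫ x in B₁, ((ν B₂).toReal * u x - ∫ z in B₂, u z ∂ν) ∂ν
        = (ν B₂).toReal * ∫ x in B₁, u x ∂ν - (ν B₁).toReal * ∫ z in B₂, u z ∂ν := by
      rw [integral_sub (hui.integrableOn.const_mul _) (integrable_const _), integral_const_mul,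
        setIntegral_const]
      simp [smul_eq_mul, Measure.real]
    have hrepr : (ν B₁).toReal⁻¹ * ∫ x in B₁, u x ∂ν - (ν B₂).toReal⁻¹ * ∫ z in B₂, u z ∂ν
        = ((ν B₁).toReal * (ν B₂).toReal)⁻¹ * ∫ x in B₁, (∫ z in B₂, (u x - u z) ∂ν) ∂ν := by
      simp_rw [hinner]
      rw [houter]
      field_simp
    rw [hrepr, abs_mul, abs_of_nonneg (inv_nonneg.2 (by positivity)),
      ENNReal.ofReal_mul (by positivity)]
    have hof : ENNReal.ofReal (((ν B₁).toReal * (ν B₂).toReal)⁻¹) = m⁻¹ := by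
      rw [← ENNReal.toReal_mul, ENNReal.ofReal_inv_of_pos (ENNReal.toReal_pos hmne hmtop),
        ENNReal.ofReal_toReal hmtop]
    rw [hof]
    have hFx : ∀ x : Z, ENNReal.ofReal |∫ z in B₂, (u x - u z) ∂ν|
        ≤ ∫⁻ z in B₂, ENNReal.ofReal |u x - u z| ∂ν := by
      intro x
      calc ENNReal.ofReal |∫ z in B₂, (u x - u z) ∂ν|
          ≤ ENNReal.ofReal ((∫⁻ z in B₂, ENNReal.ofReal |u x - u z| ∂ν).toReal) := by
            apply ENNReal.ofReal_le_ofReal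
            simpa [Real.norm_eq_abs] using
              norm_integral_le_lintegral_norm (μ := ν.restrict B₂) (fun z => u x - u z)
        _ ≤ _ := ENNReal.ofReal_toReal_le
    have hnorm : ENNReal.ofReal |∫ x in B₁, (∫ z in B₂, (u x - u z) ∂ν) ∂ν| ≤ L := by
      calc ENNReal.ofReal |∫ x in B₁, (∫ z in B₂, (u x - u z) ∂ν) ∂ν|
          ≤ ENNReal.ofReal ((∫⁻ x in B₁,
              ENNReal.ofReal |∫ z in B₂, (u x - u z) ∂ν| ∂ν).toReal) := by
            apply ENNReal.ofReal_le_ofReal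
            simpa [Real.norm_eq_abs] using
              norm_integral_le_lintegral_norm (μ := ν.restrict B₁)
                (fun x => ∫ z in B₂, (u x - u z) ∂ν)
        _ ≤ ∫⁻ x in B₁, ENNReal.ofReal |∫ z in B₂, (u x - u z) ∂ν| ∂ν := ENNReal.ofReal_toReal_le
        _ ≤ L := lintegral_mono fun x => hFx x
    calc m⁻¹ * ENNReal.ofReal |∫ x in B₁, (∫ z in B₂, (u x - u z) ∂ν) ∂ν|
        ≤ m⁻¹ * L := mul_le_mul_right hnorm _
      _ = L / m := by rw [ENNReal.div_eq_inv_mul]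
  -- Step 2
  have hGmeas : Measurable fun x => ∫⁻ z in B₂, ENNReal.ofReal (|u x - u z| ^ p) ∂ν := by
    apply Measurable.lintegral_prod_right'
      (f := fun y : Z × Z => ENNReal.ofReal (|u y.1 - u y.2| ^ p))
    exact ENNReal.measurable_ofReal.comp
      (((hu.comp measurable_fst).sub (hu.comp measurable_snd)).abs.pow measurable_const)
  have step2 : L ≤ P ^ (1 / p) * m ^ (1 / q) := by
    have inner : ∀ x : Z, ∫⁻ z in B₂, ENNReal.ofReal |u x - u z| ∂ν
        ≤ (∫⁻ z in B₂, ENNReal.ofReal (|u x - u z| ^ p) ∂ν) ^ (1 / p) * ν B₂ ^ (1 / q) := by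
      intro x
      have h := jensen_aux ν B₂ hpq (fun z => ENNReal.ofReal |u x - u z|)
        (Measurable.aemeasurable (ENNReal.measurable_ofReal.comp (measurable_const.sub hu).abs))
      simp_rw [ENNReal.ofReal_rpow_of_nonneg (abs_nonneg _) (le_of_lt hp0)] at h
      exact h
    have h2 : L ≤ ∫⁻ x in B₁, (∫⁻ z in B₂, ENNReal.ofReal (|u x - u z| ^ p) ∂ν) ^ (1 / p)
        * ν B₂ ^ (1 / q) ∂ν := lintegral_mono fun x => inner x
    rw [lintegral_mul_const' _ _ (ENNReal.rpow_ne_top_of_nonneg hpq.symm.one_div_nonneg hm₂t)] at h2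
    have h3 : ∫⁻ x in B₁, (∫⁻ z in B₂, ENNReal.ofReal (|u x - u z| ^ p) ∂ν) ^ (1 / p) ∂ν
        ≤ P ^ (1 / p) * ν B₁ ^ (1 / q) := by
      have h := jensen_aux ν B₁ hpq
        (fun x => (∫⁻ z in B₂, ENNReal.ofReal (|u x - u z| ^ p) ∂ν) ^ (1 / p))
        (Measurable.aemeasurable (hGmeas.pow measurable_const))
      simp_rw [← ENNReal.rpow_mul, one_div, inv_mul_cancel₀ (ne_of_gt hp0),
        ENNReal.rpow_one] at h
      simpa [one_div] using h
    calc L ≤ _ := h2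
      _ ≤ (P ^ (1 / p) * ν B₁ ^ (1 / q)) * ν B₂ ^ (1 / q) := mul_le_mul_left h3 _
      _ = P ^ (1 / p) * m ^ (1 / q) := by
        rw [hm, ENNReal.mul_rpow_of_nonneg _ _ hpq.symm.one_div_nonneg, mul_assoc]
  -- Step 3 and combination
  have step3 : P ≤ ENNReal.ofReal (CA * D ^ (θ * p + Q)) * besovEnergy ν θ p u :=
    double_bound ν θ p CA Q D hp0 hθ0 hQ hCA u hup B₁ B₂ hB₁ hB₂ hdist
  have hexp : 1 / q * p - p = -1 := by
    rw [hqdef, Real.conjExponent]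
    field_simp
    ring
  calc ENNReal.ofReal (|(ν B₁).toReal⁻¹ * ∫ x in B₁, u x ∂ν -
        (ν B₂).toReal⁻¹ * ∫ z in B₂, u z ∂ν| ^ p)
      = (ENNReal.ofReal |(ν B₁).toReal⁻¹ * ∫ x in B₁, u x ∂ν -
        (ν B₂).toReal⁻¹ * ∫ z in B₂, u z ∂ν|) ^ p :=
        (ENNReal.ofReal_rpow_of_nonneg (abs_nonneg _) hp0.le).symm
    _ ≤ (L / m) ^ p := ENNReal.rpow_le_rpow step1 hp0.le
    _ = L ^ p / m ^ p := ENNReal.div_rpow_of_nonneg _ _ hp0.le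
    _ ≤ (P ^ (1 / p) * m ^ (1 / q)) ^ p / m ^ p :=
        ENNReal.div_le_div_right (ENNReal.rpow_le_rpow step2 hp0.le) _
    _ = P * m ^ (1 / q * p) / m ^ p := by
        rw [ENNReal.mul_rpow_of_nonneg _ _ hp0.le, ← ENNReal.rpow_mul, ← ENNReal.rpow_mul,
          one_div, inv_mul_cancel₀ (ne_of_gt hp0), ENNReal.rpow_one, one_div]
    _ = P / m := by
        rw [mul_div_assoc, ← ENNReal.rpow_sub _ _ hmne hmtop, hexp, ENNReal.rpow_neg_one,
          ← div_eq_mul_inv]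
    _ ≤ _ := ENNReal.div_le_div_right step3 _
lemma extract_real {E : ℝ≥0∞} (hE : E ≠ ⊤) {X c₁ c₂ : ℝ} (hX : 0 ≤ X) (hc₁ : 0 ≤ c₁)
    (hc₂ : 0 < c₂) {m : ℝ≥0∞} (hm : ENNReal.ofReal c₂ ≤ m)
    (h : ENNReal.ofReal X ≤ ENNReal.ofReal c₁ * E / m) :
    X ≤ c₁ * E.toReal / c₂ := by
  have h2 : ENNReal.ofReal c₁ * E / m ≤ ENNReal.ofReal c₁ * E / ENNReal.ofReal c₂ :=
    ENNReal.div_le_div_left hm _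
  have h3 : ENNReal.ofReal c₁ * E = ENNReal.ofReal (c₁ * E.toReal) := by
    rw [ENNReal.ofReal_mul hc₁, ENNReal.ofReal_toReal hE]
  rw [h3] at h2
  rw [← ENNReal.ofReal_div_of_pos hc₂] at h2
  rw [h3] at h
  exact (ENNReal.ofReal_le_ofReal_iff (by positivity)).1 (le_trans h h2)

lemma rpow_root_le {X Y p : ℝ} (hp : 0 < p) (hX : 0 ≤ X) (h : X ^ p ≤ Y) : X ≤ Y ^ (1 / p) := by
  have hY : 0 ≤ Y := le_trans (Real.rpow_nonneg hX p) h
  have h1 : (X ^ p) ^ (1 / p) ≤ Y ^ (1 / p) :=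
    Real.rpow_le_rpow (Real.rpow_nonneg hX p) h (by positivity)
  rwa [← Real.rpow_mul hX, mul_one_div, div_self (ne_of_gt hp), Real.rpow_one] at h1

lemma cc1 {CA θ p Q s : ℝ} (hCA : 0 < CA) (hs : 0 < s) :
    CA * (2 * s) ^ (θ * p + Q) / (s ^ Q / CA * ((s * 2⁻¹) ^ Q / CA))
      = CA ^ 3 * 2 ^ (θ * p + 2 * Q) * s ^ (θ * p - Q) := by
  have e1 : ((2 : ℝ) * s) ^ (θ * p + Q) = 2 ^ (θ * p + Q) * s ^ (θ * p + Q) :=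
    Real.mul_rpow (by norm_num) hs.le
  have e2 : (s * 2⁻¹) ^ Q = s ^ Q * ((2 : ℝ) ^ Q)⁻¹ := by
    rw [Real.mul_rpow hs.le (by norm_num), Real.inv_rpow (by norm_num)]
  have e3 : s ^ (θ * p + Q) = s ^ (θ * p - Q) * s ^ Q * s ^ Q := by
    rw [← Real.rpow_add hs, ← Real.rpow_add hs]; ring_nf
  have e4 : (2 : ℝ) ^ (θ * p + 2 * Q) = 2 ^ (θ * p + Q) * 2 ^ Q := by
    rw [← Real.rpow_add (by norm_num : (0:ℝ) < 2)]; ring_nf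
  rw [e1, e2, e3, e4]
  have h1 : s ^ Q ≠ 0 := ne_of_gt (Real.rpow_pos_of_pos hs _)
  have h2 : (2 : ℝ) ^ Q ≠ 0 := ne_of_gt (Real.rpow_pos_of_pos (by norm_num) _)
  have h3 : CA ≠ 0 := ne_of_gt hCA
  field_simp

lemma cc2 {CA θ p Q s t : ℝ} (hCA : 0 < CA) (hs : 0 < s) (ht : 0 < t) :
    CA * (t * s) ^ (θ * p + Q) / (s ^ Q / CA * (s ^ Q / CA))
      = CA ^ 3 * t ^ (θ * p + Q) * s ^ (θ * p - Q) := by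
  have e1 : (t * s) ^ (θ * p + Q) = t ^ (θ * p + Q) * s ^ (θ * p + Q) :=
    Real.mul_rpow ht.le hs.le
  have e3 : s ^ (θ * p + Q) = s ^ (θ * p - Q) * s ^ Q * s ^ Q := by
    rw [← Real.rpow_add hs, ← Real.rpow_add hs]; ring_nf
  rw [e1, e3]
  have h1 : s ^ Q ≠ 0 := ne_of_gt (Real.rpow_pos_of_pos hs _)
  have h3 : CA ≠ 0 := ne_of_gt hCA
  field_simp

lemma geom_bound {τ : ℝ} (h0 : 0 ≤ τ) (h1 : τ < 1) (n : ℕ) :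
    ∑ i ∈ Finset.range n, τ ^ i ≤ (1 - τ)⁻¹ := by
  have hne : τ ≠ 1 := ne_of_lt h1
  rw [geom_sum_eq hne]
  have hpos : (0:ℝ) < 1 - τ := by linarith
  have h3 : (τ ^ n - 1) / (τ - 1) = (1 - τ ^ n) * (1 - τ)⁻¹ := by
    rw [eq_comm, ← div_eq_mul_inv, div_eq_div_iff hpos.ne' (by linarith : τ - 1 ≠ 0)]
    ring
  rw [h3]
  have h4 : 1 - τ ^ n ≤ 1 := by
    have := pow_nonneg h0 n
    linarith
  calc (1 - τ ^ n) * (1 - τ)⁻¹ ≤ 1 * (1 - τ)⁻¹ :=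
        mul_le_mul_of_nonneg_right h4 (inv_nonneg.2 hpos.le)
    _ = (1 - τ)⁻¹ := one_mul _

lemma pow_base_calc (α : ℝ) (j : ℕ) : (((2:ℝ)⁻¹) ^ j) ^ α = ((2:ℝ) ^ (-α)) ^ j := by
  have h2 : (0:ℝ) ≤ 2⁻¹ := by norm_num
  rw [← Real.rpow_natCast ((2:ℝ)⁻¹) j, ← Real.rpow_mul h2, mul_comm, Real.rpow_mul h2,
    Real.rpow_natCast]
  congr 1
  rw [Real.inv_rpow (by norm_num), ← Real.rpow_neg (by norm_num)]
set_option maxHeartbeats 1000000 in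
theorem besov_capacity_annulus_lower_supercritical
    {Z : Type*} [MetricSpace Z] [CompactSpace Z] [MeasurableSpace Z] [BorelSpace Z]
    (ν : Measure Z) (Q CA p θ : ℝ)
    (hdiam0 : 0 < Metric.diam (Set.univ : Set Z))
    (hdiam1 : Metric.diam (Set.univ : Set Z) < 1)
    (hQ : 0 < Q) (hreg : IsAhlforsRegular ν Q CA)
    (hp : 1 < p) (hθ0 : 0 < θ) (hθ1 : θ < 1) (hpθ : Q < p * θ) :
    ∃ c > 0, ∃ C₀ > (2 : ℝ), ∀ (x₀ : Z) (r R : ℝ),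
      0 < r → r < R → R < Metric.diam (Set.univ : Set Z) / (4 * C₀) →
      ENNReal.ofReal (c * R ^ (Q - θ * p)) ≤
        besovCapacity ν θ p (closedBall x₀ r) (univ \ ball x₀ R) := by
  obtain ⟨hCA, hregb⟩ := hreg
  have hCA0 : (0:ℝ) < CA := lt_of_lt_of_le one_pos hCA
  have hp0 : 0 < p := lt_trans one_pos hp
  have hθpQ : 0 < θ * p - Q := by linarith only [hpθ, mul_comm p θ]
  set dZ := Metric.diam (Set.univ : Set Z) with hdZ
  obtain ⟨K, hKdef⟩ : ∃ x : ℝ, x = (2 * CA ^ 2) ^ (1 / Q) := ⟨_, rfl⟩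
  have hK1 : 1 < K := by
    rw [hKdef]
    refine (Real.one_lt_rpow_iff_of_pos (by positivity)).2 (Or.inl ⟨by nlinarith only [hCA], by positivity⟩)
  have hK0 : 0 < K := lt_trans one_pos hK1
  have hKQ : K ^ Q = 2 * CA ^ 2 := by
    rw [hKdef, ← Real.rpow_mul (by positivity), one_div, inv_mul_cancel₀ (ne_of_gt hQ),
      Real.rpow_one]
  obtain ⟨α, hαdef⟩ : ∃ x : ℝ, x = (θ * p - Q) / p := ⟨_, rfl⟩
  have hα0 : 0 < α := by rw [hαdef]; exact div_pos hθpQ hp0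
  obtain ⟨τ, hτdef⟩ : ∃ x : ℝ, x = (2:ℝ) ^ (-α) := ⟨_, rfl⟩
  have hτ0 : 0 ≤ τ := by rw [hτdef]; exact Real.rpow_nonneg (by norm_num) _
  have hτ1 : τ < 1 := by
    rw [hτdef]; exact Real.rpow_lt_one_of_one_lt_of_neg one_lt_two (by linarith only [hα0])
  obtain ⟨σ, hσdef⟩ : ∃ x : ℝ, x = (1 - τ)⁻¹ := ⟨_, rfl⟩
  have hσ0 : 0 < σ := by rw [hσdef]; exact inv_pos.2 (by linarith only [hτ1])
  obtain ⟨κ₁, hκ₁def⟩ : ∃ x : ℝ, x = CA ^ 3 * 2 ^ (θ * p + 2 * Q) := ⟨_, rfl⟩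
  have hκ₁0 : 0 < κ₁ := by
    rw [hκ₁def]
    exact mul_pos (pow_pos hCA0 3) (Real.rpow_pos_of_pos two_pos _)
  obtain ⟨t₂, ht₂def⟩ : ∃ x : ℝ, x = 2 * K + 2 := ⟨_, rfl⟩
  have ht₂0 : 0 < t₂ := by rw [ht₂def]; linarith only [hK1]
  obtain ⟨κ₂, hκ₂def⟩ : ∃ x : ℝ, x = CA ^ 3 * t₂ ^ (θ * p + Q) := ⟨_, rfl⟩
  have hκ₂0 : 0 < κ₂ := by
    rw [hκ₂def]
    exact mul_pos (pow_pos hCA0 3) (Real.rpow_pos_of_pos ht₂0 _)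
  have hκ₁p : 0 < κ₁ ^ (1/p) := Real.rpow_pos_of_pos hκ₁0 _
  have hκ₂p : 0 < κ₂ ^ (1/p) := Real.rpow_pos_of_pos hκ₂0 _
  obtain ⟨M, hMdef⟩ : ∃ x : ℝ, x = σ * κ₁ ^ (1 / p) + κ₂ ^ (1 / p) := ⟨_, rfl⟩
  have hM0 : 0 < M := by
    rw [hMdef]; exact add_pos (mul_pos hσ0 hκ₁p) hκ₂p
  refine ⟨M ^ (-p), Real.rpow_pos_of_pos hM0 _, t₂, by rw [ht₂def]; linarith only [hK1], ?_⟩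
  intro x₀ r R hr hrR hRd
  have hR0 : 0 < R := lt_trans hr hrR
  have ht₂4 : (1:ℝ) < 4 * t₂ := by rw [ht₂def]; linarith only [hK1]
  have hRdZ : R < dZ := by
    calc R < dZ / (4 * t₂) := hRd
      _ < dZ := by
        rw [div_lt_iff₀ (by linarith only [ht₂0] : (0:ℝ) < 4 * t₂)]
        nlinarith only [hdiam0, ht₂4]
  have hKRdZ : 2 * K * R < 2 * dZ := by
    have h1 : R * (4 * t₂) < dZ := (lt_div_iff₀ (by linarith only [ht₂0] : (0:ℝ) < 4 * t₂)).1 hRd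
    rw [ht₂def] at h1
    nlinarith only [h1, mul_pos hK0 hR0, hR0, hK0]
  haveI : IsFiniteMeasure ν := by
    refine ⟨?_⟩
    have hsub : (univ : Set Z) ⊆ ball x₀ (2⁻¹ * 3 * dZ) := by
      intro z _
      have hd := dist_le_diam_of_mem isCompact_univ.isBounded (mem_univ z) (mem_univ x₀)
      rw [← hdZ] at hd
      exact mem_ball.2 (by linarith only [hd, hdiam0])
    exact lt_of_le_of_lt (measure_mono hsub)
      (lt_of_le_of_lt (hregb x₀ _ (by linarith only [hdiam0]) (by linarith only [hdiam0])).2 ENNReal.ofReal_lt_top)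
  have hup : ∀ x z : Z, x ≠ z → ν (ball x (dist x z)) ≤ ENNReal.ofReal (CA * dist x z ^ Q) := by
    intro x z hne
    have hd0 : 0 < dist x z := dist_pos.2 hne
    have hdle : dist x z ≤ dZ :=
      dist_le_diam_of_mem isCompact_univ.isBounded (mem_univ x) (mem_univ z)
    exact (hregb x _ hd0 (by linarith only [hdle, hdiam0])).2
  have hlow : ∀ (x : Z) (s : ℝ), 0 < s → s ≤ R → ENNReal.ofReal (s ^ Q / CA) ≤ ν (ball x s) :=
    fun x s hs hsR => (hregb x s hs (by linarith only [hsR, hRdZ, hdiam0])).1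
  have hne0 : ∀ (x : Z) (s : ℝ), 0 < s → s ≤ R → ν (ball x s) ≠ 0 := by
    intro x s hs hsR
    have h1 := hlow x s hs hsR
    have h2 : (0:ℝ≥0∞) < ENNReal.ofReal (s ^ Q / CA) :=
      ENNReal.ofReal_pos.2 (div_pos (Real.rpow_pos_of_pos hs _) hCA0)
    exact (lt_of_lt_of_le h2 h1).ne'
  -- an annulus point
  have hyex : ∃ y : Z, 2 * R ≤ dist x₀ y ∧ dist x₀ y < 2 * K * R := by
    by_contra hcon
    push_neg at hcon
    have hsub2 : ball x₀ (2 * K * R) ⊆ ball x₀ (2 * R) := by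
      intro z hz
      rw [mem_ball'] at hz ⊢
      by_contra h2
      push_neg at h2
      exact absurd hz (not_lt.2 (hcon z h2))
    have hub : ν (ball x₀ (2 * K * R)) ≤ ENNReal.ofReal (CA * (2 * R) ^ Q) :=
      le_trans (measure_mono hsub2) (hregb x₀ _ (by linarith only [hR0]) (by linarith only [hRdZ])).2
    have hlb : ENNReal.ofReal ((2 * K * R) ^ Q / CA) ≤ ν (ball x₀ (2 * K * R)) :=
      (hregb x₀ _ (mul_pos (mul_pos two_pos hK0) hR0) hKRdZ).1
    have hcmp := le_trans hlb hub
    rw [ENNReal.ofReal_le_ofReal_iff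
      (mul_nonneg hCA0.le (Real.rpow_nonneg (by linarith only [hR0]) _))] at hcmp
    have hexp : (2 * K * R) ^ Q = K ^ Q * (2 * R) ^ Q := by
      rw [show (2:ℝ) * K * R = K * (2 * R) by ring,
        Real.mul_rpow hK0.le (by linarith only [hR0])]
    rw [hexp, hKQ] at hcmp
    have h2RQ : 0 < (2 * R) ^ Q := Real.rpow_pos_of_pos (by linarith only [hR0]) _
    rw [div_le_iff₀ hCA0] at hcmp
    nlinarith only [hcmp, mul_pos (mul_pos hCA0 hCA0) h2RQ, hCA0, h2RQ]
  obtain ⟨y, hy1, hy2⟩ := hyex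
  -- reduce to a single admissible function
  unfold besovCapacity
  refine le_iInf fun u => le_iInf fun hmem => le_iInf fun hU => le_iInf fun hV => ?_
  obtain ⟨U, hUopen, hUsub, hU1⟩ := hU
  obtain ⟨V, hVopen, hVsub, hV0⟩ := hV
  by_cases hEtop : besovEnergy ν θ p u = ⊤
  · rw [hEtop]; exact le_top
  have haem : AEMeasurable u ν := hmem.1.aestronglyMeasurable.aemeasurable
  set g := haem.mk u with hgdef
  have hg : Measurable g := haem.measurable_mk
  have hug : u =ᵐ[ν] g := haem.ae_eq_mk
  have hui : Integrable u ν := MemLp.integrable (ENNReal.one_le_ofReal.2 hp.le) hmem.1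
  have hgi : Integrable g ν := hui.congr hug
  have hEg : besovEnergy ν θ p g = besovEnergy ν θ p u := (besovEnergy_congr_ae ν θ p hug).symm
  set e := (besovEnergy ν θ p u).toReal with hedef
  have he0 : 0 ≤ e := ENNReal.toReal_nonneg
  have hg1 : ∀ᵐ x ∂ν, x ∈ U → 1 ≤ g x := by
    filter_upwards [hug] with x hx hxU
    rw [← hx]; exact hU1 x hxU
  have hg0 : ∀ᵐ x ∂ν, x ∈ V → g x ≤ 0 := by
    filter_upwards [hug] with x hx hxV
    rw [← hx]; exact hV0 x hxV
  obtain ⟨ρ, hρ0, hρU⟩ := Metric.isOpen_iff.1 hUopen x₀ (hUsub (mem_closedBall_self hr.le))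
  set Rj : ℕ → ℝ := fun j => R * (2⁻¹ : ℝ) ^ j with hRjdef
  have hRj0 : ∀ j, 0 < Rj j := fun j => by
    show 0 < R * (2⁻¹ : ℝ) ^ j
    positivity
  have hRjle : ∀ j, Rj j ≤ R := by
    intro j
    show R * (2⁻¹ : ℝ) ^ j ≤ R
    have h1 : ((2:ℝ)⁻¹) ^ j ≤ 1 := pow_le_one₀ (by norm_num) (by norm_num)
    nlinarith only [h1, hR0]
  set a : ℕ → ℝ := fun j => (ν (ball x₀ (Rj j))).toReal⁻¹ * ∫ x in ball x₀ (Rj j), g x ∂ν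
    with hadef
  set b : ℝ := (ν (ball y R)).toReal⁻¹ * ∫ z in ball y R, g z ∂ν with hbdef
  -- consecutive chain step
  have hstep : ∀ j : ℕ, |a j - a (j+1)| ≤ κ₁ ^ (1/p) * (e ^ (1/p) * R ^ α) * τ ^ j := by
    intro j
    have hs0 : 0 < Rj j := hRj0 j
    have hhalf : Rj (j+1) = Rj j * 2⁻¹ := by
      show R * (2⁻¹ : ℝ) ^ (j+1) = R * (2⁻¹ : ℝ) ^ j * 2⁻¹
      rw [pow_succ]; ring
    have hdd : ∀ x ∈ ball x₀ (Rj j), ∀ z ∈ ball x₀ (Rj (j+1)), dist x z ≤ 2 * Rj j := by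
      intro x hx z hz
      have h1 : dist x x₀ < Rj j := mem_ball.1 hx
      have h2 : dist z x₀ < Rj (j+1) := mem_ball.1 hz
      have h3 : Rj (j+1) ≤ Rj j := by rw [hhalf]; linarith only [hs0]
      calc dist x z ≤ dist x x₀ + dist x₀ z := dist_triangle _ _ _
        _ = dist x x₀ + dist z x₀ := by rw [dist_comm x₀ z]
        _ ≤ 2 * Rj j := by linarith only [h1, h2, h3]
    have hos := onestep ν θ p CA Q (2 * Rj j) hp hθ0 hQ hCA g hg hgi hup
      (ball x₀ (Rj j)) (ball x₀ (Rj (j+1))) measurableSet_ball measurableSet_ball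
      (hne0 x₀ (Rj j) hs0 (hRjle j)) (hne0 x₀ (Rj (j+1)) (hRj0 _) (hRjle _)) hdd
    rw [hEg] at hos
    have hm : ENNReal.ofReal ((Rj j) ^ Q / CA * ((Rj j * 2⁻¹) ^ Q / CA)) ≤
        ν (ball x₀ (Rj j)) * ν (ball x₀ (Rj (j+1))) := by
      rw [ENNReal.ofReal_mul (div_nonneg (Real.rpow_nonneg hs0.le _) hCA0.le)]
      refine mul_le_mul' (hlow x₀ (Rj j) hs0 (hRjle j)) ?_
      rw [← hhalf]
      exact hlow x₀ _ (hRj0 _) (hRjle _)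
    have hex := extract_real hEtop (Real.rpow_nonneg (abs_nonneg _) p)
      (mul_nonneg hCA0.le (Real.rpow_nonneg (by linarith only [hs0]) _))
      (mul_pos (div_pos (Real.rpow_pos_of_pos hs0 _) hCA0)
        (div_pos (Real.rpow_pos_of_pos (by linarith only [hs0]) _) hCA0)) hm hos
    have hccc : CA * (2 * Rj j) ^ (θ*p+Q) * e / ((Rj j) ^ Q / CA * ((Rj j * 2⁻¹) ^ Q / CA))
        = κ₁ * (Rj j) ^ (θ*p-Q) * e := by
      have hc := cc1 (CA := CA) (θ := θ) (p := p) (Q := Q) (s := Rj j) hCA0 hs0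
      calc CA * (2 * Rj j) ^ (θ*p+Q) * e / ((Rj j) ^ Q / CA * ((Rj j * 2⁻¹) ^ Q / CA))
          = (CA * (2 * Rj j) ^ (θ*p+Q) / ((Rj j) ^ Q / CA * ((Rj j * 2⁻¹) ^ Q / CA))) * e := by
            ring
        _ = κ₁ * (Rj j) ^ (θ*p-Q) * e := by rw [hc, hκ₁def]
    rw [hccc] at hex
    have hroot := rpow_root_le hp0 (abs_nonneg _) hex
    refine le_trans hroot (le_of_eq ?_)
    have h1 : 0 ≤ (Rj j) ^ (θ*p-Q) := (Real.rpow_pos_of_pos hs0 _).le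
    rw [Real.mul_rpow (mul_nonneg hκ₁0.le h1) he0, Real.mul_rpow hκ₁0.le h1]
    have h2 : ((Rj j) ^ (θ*p-Q)) ^ (1/p) = (Rj j) ^ α := by
      rw [← Real.rpow_mul hs0.le, mul_one_div, ← hαdef]
    rw [h2]
    have h3 : (Rj j) ^ α = R ^ α * τ ^ j := by
      show (R * (2⁻¹ : ℝ) ^ j) ^ α = R ^ α * τ ^ j
      rw [Real.mul_rpow hR0.le (by positivity), pow_base_calc, hτdef]
    rw [h3]
    ring
  -- the index J
  obtain ⟨J, hJ⟩ : ∃ n : ℕ, Rj n < ρ := by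
    obtain ⟨n, hn⟩ := exists_pow_lt_of_lt_one (div_pos hρ0 hR0) (by norm_num : (2⁻¹:ℝ) < 1)
    exact ⟨n, by show R * (2⁻¹ : ℝ) ^ n < ρ; rw [← lt_div_iff₀' hR0]; exact hn⟩
  -- a J ≥ 1
  have h1J : (1:ℝ) ≤ a J := by
    have hsubU : ball x₀ (Rj J) ⊆ U := fun w hw =>
      hρU (mem_ball.2 (lt_trans (mem_ball.1 hw) hJ))
    have hm0 := hne0 x₀ (Rj J) (hRj0 J) (hRjle J)
    have hpos : 0 < (ν (ball x₀ (Rj J))).toReal :=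
      ENNReal.toReal_pos hm0 (measure_ne_top ν _)
    have hint : (ν (ball x₀ (Rj J))).toReal = ∫ _x in ball x₀ (Rj J), (1:ℝ) ∂ν := by
      rw [setIntegral_const]; simp [Measure.real]
    have hmono : ∫ _x in ball x₀ (Rj J), (1:ℝ) ∂ν ≤ ∫ x in ball x₀ (Rj J), g x ∂ν := by
      refine integral_mono_ae (integrable_const _) hgi.integrableOn ?_
      exact (ae_restrict_iff' measurableSet_ball).2 (hg1.mono fun x hx hxB => hx (hsubU hxB))
    show (1:ℝ) ≤ (ν (ball x₀ (Rj J))).toReal⁻¹ * ∫ x in ball x₀ (Rj J), g x ∂ν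
    calc (1:ℝ) = (ν (ball x₀ (Rj J))).toReal⁻¹ * (ν (ball x₀ (Rj J))).toReal :=
          (inv_mul_cancel₀ hpos.ne').symm
      _ ≤ (ν (ball x₀ (Rj J))).toReal⁻¹ * ∫ x in ball x₀ (Rj J), g x ∂ν := by
          refine mul_le_mul_of_nonneg_left ?_ (inv_nonneg.2 hpos.le)
          exact le_trans (le_of_eq hint) hmono
  -- b ≤ 0
  have hb0 : b ≤ 0 := by
    have hsubV : ball y R ⊆ V := by
      intro z hz
      refine hVsub ⟨mem_univ z, ?_⟩
      simp only [mem_ball]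
      intro hmem
      have h1 : dist x₀ y ≤ dist x₀ z + dist z y := dist_triangle _ _ _
      have h2 : dist z y < R := mem_ball.1 hz
      have h3 : dist x₀ z = dist z x₀ := dist_comm _ _
      linarith only [hy1, h1, h2, h3, hmem]
    have hmono : ∫ z in ball y R, g z ∂ν ≤ ∫ _z in ball y R, (0:ℝ) ∂ν := by
      refine integral_mono_ae hgi.integrableOn (integrable_const _) ?_
      exact (ae_restrict_iff' measurableSet_ball).2 (hg0.mono fun x hx hxB => hx (hsubV hxB))
    have hz : ∫ _z in ball y R, (0:ℝ) ∂ν = 0 := by simp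
    have hinv : (0:ℝ) ≤ (ν (ball y R)).toReal⁻¹ := inv_nonneg.2 ENNReal.toReal_nonneg
    show (ν (ball y R)).toReal⁻¹ * ∫ z in ball y R, g z ∂ν ≤ 0
    calc (ν (ball y R)).toReal⁻¹ * ∫ z in ball y R, g z ∂ν
        ≤ (ν (ball y R)).toReal⁻¹ * 0 :=
          mul_le_mul_of_nonneg_left (le_trans hmono (le_of_eq hz)) hinv
      _ = 0 := mul_zero _
  -- side step
  have hside : |a 0 - b| ≤ κ₂ ^ (1/p) * (e ^ (1/p) * R ^ α) := by
    have hRj0eq : Rj 0 = R := by show R * (2⁻¹ : ℝ) ^ 0 = R; simp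
    have hdd : ∀ x ∈ ball x₀ (Rj 0), ∀ z ∈ ball y R, dist x z ≤ t₂ * R := by
      intro x hx z hz
      have h1 : dist x x₀ < Rj 0 := mem_ball.1 hx
      rw [hRj0eq] at h1
      have h2 : dist z y < R := mem_ball.1 hz
      calc dist x z ≤ dist x x₀ + dist x₀ y + dist y z := dist_triangle4 _ _ _ _
        _ = dist x x₀ + dist x₀ y + dist z y := by rw [dist_comm y z]
        _ ≤ t₂ * R := by rw [ht₂def]; linarith only [h1, h2, hy2]
    have hos := onestep ν θ p CA Q (t₂ * R) hp hθ0 hQ hCA g hg hgi hup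
      (ball x₀ (Rj 0)) (ball y R) measurableSet_ball measurableSet_ball
      (hne0 x₀ (Rj 0) (hRj0 0) (hRjle 0)) (hne0 y R hR0 le_rfl) hdd
    rw [hEg] at hos
    have hm : ENNReal.ofReal ((Rj 0) ^ Q / CA * (R ^ Q / CA)) ≤
        ν (ball x₀ (Rj 0)) * ν (ball y R) := by
      rw [ENNReal.ofReal_mul (div_nonneg (Real.rpow_nonneg (hRj0 0).le _) hCA0.le)]
      exact mul_le_mul' (hlow x₀ _ (hRj0 0) (hRjle 0)) (hlow y R hR0 le_rfl)
    have hex := extract_real hEtop (Real.rpow_nonneg (abs_nonneg _) p)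
      (mul_nonneg hCA0.le (Real.rpow_nonneg (mul_nonneg ht₂0.le hR0.le) _))
      (mul_pos (div_pos (Real.rpow_pos_of_pos (hRj0 0) _) hCA0)
        (div_pos (Real.rpow_pos_of_pos hR0 _) hCA0)) hm hos
    have hccc : CA * (t₂ * R) ^ (θ*p+Q) * e / ((Rj 0) ^ Q / CA * (R ^ Q / CA))
        = κ₂ * R ^ (θ*p-Q) * e := by
      rw [hRj0eq]
      have hc := cc2 (CA := CA) (θ := θ) (p := p) (Q := Q) (s := R) (t := t₂) hCA0 hR0 ht₂0
      calc CA * (t₂ * R) ^ (θ*p+Q) * e / (R ^ Q / CA * (R ^ Q / CA))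
          = (CA * (t₂ * R) ^ (θ*p+Q) / (R ^ Q / CA * (R ^ Q / CA))) * e := by ring
        _ = κ₂ * R ^ (θ*p-Q) * e := by rw [hc, hκ₂def]
    rw [hccc] at hex
    have hroot := rpow_root_le hp0 (abs_nonneg _) hex
    refine le_trans hroot (le_of_eq ?_)
    have h1 : 0 ≤ R ^ (θ*p-Q) := (Real.rpow_pos_of_pos hR0 _).le
    rw [Real.mul_rpow (mul_nonneg hκ₂0.le h1) he0, Real.mul_rpow hκ₂0.le h1]
    have h2 : (R ^ (θ*p-Q)) ^ (1/p) = R ^ α := by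
      rw [← Real.rpow_mul hR0.le, mul_one_div, ← hαdef]
    rw [h2]
    ring
  -- telescoping
  have hsum : |a 0 - a J| ≤ κ₁ ^ (1/p) * (e ^ (1/p) * R ^ α) * σ := by
    have htel := dist_le_range_sum_dist a J
    simp only [Real.dist_eq] at htel
    calc |a 0 - a J| ≤ ∑ i ∈ Finset.range J, |a i - a (i+1)| := htel
      _ ≤ ∑ i ∈ Finset.range J, κ₁ ^ (1/p) * (e ^ (1/p) * R ^ α) * τ ^ i :=
          Finset.sum_le_sum fun i _ => hstep i
      _ = κ₁ ^ (1/p) * (e ^ (1/p) * R ^ α) * ∑ i ∈ Finset.range J, τ ^ i := by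
          rw [Finset.mul_sum]
      _ ≤ κ₁ ^ (1/p) * (e ^ (1/p) * R ^ α) * σ := by
          refine mul_le_mul_of_nonneg_left ?_ ?_
          · rw [hσdef]; exact geom_bound hτ0 hτ1 J
          · exact mul_nonneg hκ₁p.le
              (mul_nonneg (Real.rpow_nonneg he0 _) (Real.rpow_nonneg hR0.le _))
  -- final assembly
  have hfin : 1 ≤ M * (e ^ (1/p) * R ^ α) := by
    have habs1 : a J - a 0 ≤ |a 0 - a J| := by rw [abs_sub_comm]; exact le_abs_self _
    have habs2 : a 0 - b ≤ |a 0 - b| := le_abs_self _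
    have hMr : M * (e ^ (1/p) * R ^ α) =
        κ₁ ^ (1/p) * (e ^ (1/p) * R ^ α) * σ + κ₂ ^ (1/p) * (e ^ (1/p) * R ^ α) := by
      rw [hMdef]; ring
    rw [hMr]
    linarith only [hsum, hside, habs1, habs2, h1J, hb0]
  have hRα : 0 < R ^ α := Real.rpow_pos_of_pos hR0 _
  have h1M : 1/M ≤ e ^ (1/p) * R ^ α := by
    rw [div_le_iff₀ hM0, mul_comm]; exact hfin
  have hep : (1/M) / (R ^ α) ≤ e ^ (1/p) := by
    rw [div_le_iff₀ hRα]; exact h1M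
  have hfinal : M ^ (-p) * R ^ (Q - θ*p) ≤ e := by
    have h1 : ((1/M) / (R ^ α)) ^ p ≤ (e ^ (1/p)) ^ p :=
      Real.rpow_le_rpow (div_nonneg (div_nonneg zero_le_one hM0.le) hRα.le) hep hp0.le
    have h2 : (e ^ (1/p)) ^ p = e := by
      rw [← Real.rpow_mul he0, one_div, inv_mul_cancel₀ hp0.ne', Real.rpow_one]
    have h3 : ((1/M) / (R ^ α)) ^ p = M ^ (-p) * R ^ (Q - θ*p) := by
      rw [Real.div_rpow (div_nonneg zero_le_one hM0.le) hRα.le,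
        Real.div_rpow zero_le_one hM0.le, Real.one_rpow,
        ← Real.rpow_mul hR0.le]
      have hαp : α * p = θ*p - Q := by rw [hαdef]; field_simp
      rw [hαp, Real.rpow_neg hM0.le,
        show Q - θ*p = -(θ*p - Q) by ring, Real.rpow_neg hR0.le]
      field_simp
    rw [h2] at h1
    rw [← h3]
    exact h1
  calc ENNReal.ofReal (M ^ (-p) * R ^ (Q - θ * p)) ≤ ENNReal.ofReal e :=
        ENNReal.ofReal_le_ofReal hfinal
    _ = besovEnergy ν θ p u := ENNReal.ofReal_toReal hEtop
end
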